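/- arXiv:1407.0795 — 9 statements merged into one kernel-verified Lean document; each statement's English description precedes it below -/
import Mathlib

section
/- Let g(φ) = √(2 + 2cos φ). For any three real angles x, y, z, we have g(x + y + z) ≤ g(x) + g(y) + g(z), and the inequality is strict unless two of x, y, z are congruent to π modulo 2π. -/
open Real

private lemma sinabs_lt_one {a : ℝ} (ha : Real.cos a ≠ 0) : |Real.sin a| < 1 := by
  rw [← sq_lt_one_iff_abs_lt_one]
  have h : 0 < Real.cos a ^ 2 := by positivity
  nlinarith [Real.sin_sq_add_cos_sq a]

private lemma weak3 (a b c : ℝ) :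
    |Real.cos (a + b + c)| ≤ |Real.cos a| + |Real.cos b| + |Real.cos c| := by
  have h1 : Real.cos (a + b + c) = Real.cos a * Real.cos (b + c) - Real.sin a * Real.sin (b + c) := by
    rw [add_assoc, Real.cos_add]
  have h2 : |Real.cos (a + b + c)| ≤ |Real.cos a| * |Real.cos (b + c)| + |Real.sin a| * |Real.sin (b + c)| := by
    rw [h1]
    exact (abs_sub _ _).trans (by rw [abs_mul, abs_mul])
  have h3 : |Real.sin (b + c)| ≤ |Real.sin b| * |Real.cos c| + |Real.cos b| * |Real.sin c| := by
    rw [Real.sin_add]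
    exact (abs_add_le _ _).trans (by rw [abs_mul, abs_mul])
  nlinarith [Real.abs_cos_le_one (b + c), Real.abs_sin_le_one a, Real.abs_sin_le_one b,
    Real.abs_sin_le_one c, abs_nonneg (Real.cos a), abs_nonneg (Real.cos b),
    abs_nonneg (Real.cos c), abs_nonneg (Real.sin (b + c)), abs_nonneg (Real.sin a),
    abs_nonneg (Real.sin b), abs_nonneg (Real.sin c)]

/-- strict inequality when all three cosines are nonzero -/
private lemma strictAll (a b c : ℝ) (ha : Real.cos a ≠ 0) (hb : Real.cos b ≠ 0)
    (hc : Real.cos c ≠ 0) :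
    |Real.cos (a + b + c)| < |Real.cos a| + |Real.cos b| + |Real.cos c| := by
  have h1 : Real.cos (a + b + c) = Real.cos a * Real.cos (b + c) - Real.sin a * Real.sin (b + c) := by
    rw [add_assoc, Real.cos_add]
  have h2 : |Real.cos (a + b + c)| ≤ |Real.cos a| * |Real.cos (b + c)| + |Real.sin a| * |Real.sin (b + c)| := by
    rw [h1]
    exact (abs_sub _ _).trans (by rw [abs_mul, abs_mul])
  have h3 : |Real.sin (b + c)| ≤ |Real.sin b| * |Real.cos c| + |Real.cos b| * |Real.sin c| := by
    rw [Real.sin_add]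
    exact (abs_add_le _ _).trans (by rw [abs_mul, abs_mul])
  have hsb : |Real.sin b| < 1 := sinabs_lt_one hb
  have hcc : 0 < |Real.cos c| := abs_pos.mpr hc
  nlinarith [Real.abs_cos_le_one (b + c), Real.abs_sin_le_one a, Real.abs_sin_le_one c,
    abs_nonneg (Real.cos a), abs_nonneg (Real.cos b), abs_nonneg (Real.sin (b + c)),
    abs_nonneg (Real.sin a), abs_nonneg (Real.sin b), abs_nonneg (Real.sin c)]

/-- strict inequality when exactly one (the last) cosine is zero -/
private lemma strictOne (a b c : ℝ) (ha : Real.cos a ≠ 0) (hb : Real.cos b ≠ 0)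
    (hc : Real.cos c = 0) :
    |Real.cos (a + b + c)| < |Real.cos a| + |Real.cos b| + |Real.cos c| := by
  have hsc : |Real.sin c| = 1 := by
    have h := Real.sin_sq_add_cos_sq c
    rw [hc] at h
    nlinarith [abs_nonneg (Real.sin c), sq_abs (Real.sin c)]
  have h1 : Real.cos (a + b + c) = -(Real.sin (a + b) * Real.sin c) := by
    rw [Real.cos_add, hc]; ring
  have h2 : |Real.cos (a + b + c)| = |Real.sin (a + b)| := by
    rw [h1, abs_neg, abs_mul, hsc, mul_one]
  have h3 : |Real.sin (a + b)| ≤ |Real.sin a| * |Real.cos b| + |Real.cos a| * |Real.sin b| := by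
    rw [Real.sin_add]
    exact (abs_add_le _ _).trans (by rw [abs_mul, abs_mul])
  have hsa : |Real.sin a| < 1 := sinabs_lt_one ha
  have hcb : 0 < |Real.cos b| := abs_pos.mpr hb
  rw [h2, hc, abs_zero]
  nlinarith [Real.abs_sin_le_one b, abs_nonneg (Real.cos a)]

private lemma strict3 (a b c : ℝ) (h1 : ¬(Real.cos a = 0 ∧ Real.cos b = 0))
    (h2 : ¬(Real.cos a = 0 ∧ Real.cos c = 0)) (h3 : ¬(Real.cos b = 0 ∧ Real.cos c = 0)) :
    |Real.cos (a + b + c)| < |Real.cos a| + |Real.cos b| + |Real.cos c| := by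
  by_cases ha : Real.cos a = 0
  · have hb : Real.cos b ≠ 0 := fun h => h1 ⟨ha, h⟩
    have hc : Real.cos c ≠ 0 := fun h => h2 ⟨ha, h⟩
    have := strictOne b c a hb hc ha
    rw [show b + c + a = a + b + c by ring] at this
    linarith
  · by_cases hb : Real.cos b = 0
    · have hc : Real.cos c ≠ 0 := fun h => h3 ⟨hb, h⟩
      have := strictOne a c b ha hc hb
      rw [show a + c + b = a + b + c by ring] at this
      linarith
    · by_cases hc : Real.cos c = 0
      · exact strictOne a b c ha hb hc
      · exact strictAll a b c ha hb hc

private lemma g_eq (φ : ℝ) : Real.sqrt (2 + 2 * Real.cos φ) = 2 * |Real.cos (φ / 2)| := by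
  have h : Real.cos φ = 2 * Real.cos (φ / 2) ^ 2 - 1 := by
    have := Real.cos_two_mul (φ / 2)
    rw [show 2 * (φ / 2) = φ by ring] at this
    linarith
  have h2 : 2 + 2 * Real.cos φ = (2 * |Real.cos (φ / 2)|) ^ 2 := by
    rw [h]
    have := sq_abs (Real.cos (φ / 2))
    nlinarith
  rw [h2, Real.sqrt_sq (by positivity)]

private lemma cos_zero_iff (x : ℝ) :
    Real.cos (x / 2) = 0 ↔ ∃ k : ℤ, x = π + 2 * π * k := by
  rw [Real.cos_eq_zero_iff]
  constructor
  · rintro ⟨k, hk⟩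
    exact ⟨k, by field_simp at hk; linarith⟩
  · rintro ⟨k, hk⟩
    exact ⟨k, by rw [hk]; push_cast; ring⟩

/-- for `g φ = √(2 + 2 cos φ)`, `g (x+y+z) ≤ g x + g y + g z`,
with strict inequality unless two of `x, y, z` are congruent to `π` mod `2π`. -/
theorem g_subadditive_three
    (g : ℝ → ℝ) (hg : ∀ φ, g φ = Real.sqrt (2 + 2 * Real.cos φ)) (x y z : ℝ) :
    g (x + y + z) ≤ g x + g y + g z ∧
      (g (x + y + z) = g x + g y + g z →
        ((∃ k : ℤ, x = π + 2 * π * k) ∧ (∃ k : ℤ, y = π + 2 * π * k)) ∨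
        ((∃ k : ℤ, x = π + 2 * π * k) ∧ (∃ k : ℤ, z = π + 2 * π * k)) ∨
        ((∃ k : ℤ, y = π + 2 * π * k) ∧ (∃ k : ℤ, z = π + 2 * π * k))) := by
  have hG : ∀ φ, g φ = 2 * |Real.cos (φ / 2)| := fun φ => by rw [hg, g_eq]
  have hsplit : (x + y + z) / 2 = x / 2 + y / 2 + z / 2 := by ring
  constructor
  · rw [hG, hG, hG, hG, hsplit]
    have := weak3 (x / 2) (y / 2) (z / 2)
    linarith
  · intro heq
    by_contra hcon
    rw [not_or, not_or] at hcon
    obtain ⟨h1, h2, h3⟩ := hcon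
    have h1' : ¬(Real.cos (x / 2) = 0 ∧ Real.cos (y / 2) = 0) := by
      rw [cos_zero_iff, cos_zero_iff]
      exact h1
    have h2' : ¬(Real.cos (x / 2) = 0 ∧ Real.cos (z / 2) = 0) := by
      rw [cos_zero_iff, cos_zero_iff]
      exact h2
    have h3' : ¬(Real.cos (y / 2) = 0 ∧ Real.cos (z / 2) = 0) := by
      rw [cos_zero_iff, cos_zero_iff]
      exact h3
    have := strict3 (x / 2) (y / 2) (z / 2) h1' h2' h3'
    rw [hG, hG, hG, hG, hsplit] at heq
    linarith
end

section
/- For all x with π/4 < x < π/2, sin²x + (cot x + sin x − 1)² < 1. -/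
open Real

/-- for `π/4 < x < π/2`, `sin²x + (cot x + sin x - 1)² < 1`. -/
theorem sin_sq_add_cot_sin_lt_one (x : ℝ) (h1 : π / 4 < x) (h2 : x < π / 2) :
    Real.sin x ^ 2 + (Real.cos x / Real.sin x + Real.sin x - 1) ^ 2 < 1 := by
  have hpi := Real.pi_pos
  have hs : 0 < Real.sin x :=
    Real.sin_pos_of_pos_of_lt_pi (by linarith) (by linarith)
  have hc : 0 < Real.cos x := Real.cos_pos_of_mem_Ioo ⟨by linarith, h2⟩
  have hpyth := Real.sin_sq_add_cos_sq x
  have hs1 : Real.sin x < 1 := by nlinarith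
  have hc1 : Real.cos x < 1 := by nlinarith
  have hcs : Real.cos x < Real.sin x := by
    have := Real.sin_lt_sin_of_lt_of_le_pi_div_two (x := π / 2 - x) (y := x)
      (by linarith) (le_of_lt h2) (by linarith)
    rwa [Real.sin_pi_div_two_sub] at this
  have hdiv : Real.cos x / Real.sin x < 1 := (div_lt_one hs).2 hcs
  have key : (Real.cos x / Real.sin x + Real.sin x - 1) ^ 2 < Real.cos x ^ 2 := by
    apply sq_lt_sq'
    · have hpos : 0 < Real.cos x / Real.sin x := div_pos hc hs
      nlinarith
    · have : Real.cos x / Real.sin x < Real.cos x - Real.sin x + 1 := by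
        rw [div_lt_iff₀ hs]
        nlinarith
      linarith
  linarith
end

section
/- Let A, B, C, D be four non-overlapping unit balls in ℝ^d. It is impossible for there to exist both a line transversal meeting them in the order A, B, C, D and a line transversal meeting them in the order B, A, D, C. -/
/-!
Write each centre `x` as `p + tₓ • v + ξₓ` with `ξₓ ⟂ v`; a line meeting the unit ball at `x`
has `‖ξₓ‖ ≤ 1`, and `dist x y ^ 2 = (t_y - tₓ) ^ 2 + ‖ξ_y - ξₓ‖ ^ 2`. For centres at distance at
least `2` the parallelogram law then gives `‖ξₓ + ξ_y‖ ≤ |t_y - tₓ|`. In the order `A B C D`,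
`‖ξ_e - ξ_a‖ ^ 2 - ‖ξ_c - ξ_b‖ ^ 2 = ⟪(ξ_c + ξ_e) - (ξ_a + ξ_b), (ξ_b + ξ_e) - (ξ_a + ξ_c)⟫`,
and bounding the four inner products of pair sums by Cauchy–Schwarz gives
`dist b c < dist a e`, strictly because the bound on `⟪ξ_a + ξ_b, ξ_a + ξ_c⟫` cannot be attained.
The order `B A D C` gives the reverse inequality.
-/

open RealInnerProductSpace

section

variable {E : Type*} [NormedAddCommGroup E] [InnerProductSpace ℝ E]

theorem norm_add_le_of_four_le_sq_add_norm_sub_sq {α β : E} {s : ℝ} (hα : ‖α‖ ≤ 1)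
    (hβ : ‖β‖ ≤ 1) (hs : 0 ≤ s) (h : 4 ≤ s ^ 2 + ‖β - α‖ ^ 2) : ‖α + β‖ ≤ s := by
  have hpar := parallelogram_law_with_norm ℝ α β
  rw [← norm_neg (α - β), neg_sub] at hpar
  refine (pow_le_pow_iff_left₀ (norm_nonneg _) hs two_ne_zero).1 ?_
  nlinarith [norm_nonneg α, norm_nonneg β]

theorem real_inner_add_left_self_of_norm_eq {α β : E} (h : ‖α‖ = ‖β‖) :
    ⟪α + β, α⟫ = ‖α + β‖ ^ 2 / 2 := by
  rw [norm_add_sq_real, inner_add_left, real_inner_self_eq_norm_sq, real_inner_comm, h]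
  ring

theorem neg_mul_lt_real_inner_add_add {α β γ : E} {s t : ℝ} (hα : ‖α‖ ≤ 1) (hβ : ‖β‖ ≤ 1)
    (hγ : ‖γ‖ ≤ 1) (hs : 0 < s) (ht : 0 < t) (hαβ : 4 ≤ s ^ 2 + ‖β - α‖ ^ 2)
    (hαγ : 4 ≤ t ^ 2 + ‖γ - α‖ ^ 2) : -(s * t) < ⟪α + β, α + γ⟫ := by
  -- Equality would force `‖α‖ = ‖β‖ = ‖γ‖ = 1` and `α + β`, `α + γ` antiparallel, although both
  -- have positive inner product with `α`.
  by_contra! h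
  have hx := norm_add_le_of_four_le_sq_add_norm_sub_sq hα hβ hs.le hαβ
  have hy := norm_add_le_of_four_le_sq_add_norm_sub_sq hα hγ ht.le hαγ
  have hcs := neg_le_of_abs_le (abs_real_inner_le_norm (α + β) (α + γ))
  have hxs : ‖α + β‖ = s := by nlinarith [norm_nonneg (α + β), norm_nonneg (α + γ)]
  have hyt : ‖α + γ‖ = t := by nlinarith [norm_nonneg (α + β), norm_nonneg (α + γ)]
  rw [hxs, hyt] at hcs
  have hpar₁ := parallelogram_law_with_norm ℝ α β
  have hpar₂ := parallelogram_law_with_norm ℝ α γ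
  rw [← norm_neg (α - β), neg_sub] at hpar₁
  rw [← norm_neg (α - γ), neg_sub] at hpar₂
  have hα1 : ‖α‖ = 1 := by nlinarith [norm_nonneg α, norm_nonneg β]
  have hβ1 : ‖β‖ = 1 := by nlinarith [norm_nonneg α, norm_nonneg β]
  have hγ1 : ‖γ‖ = 1 := by nlinarith [norm_nonneg α, norm_nonneg γ]
  have hanti : t • (α + β) = -(s • (α + γ)) := by
    have heq : ⟪α + β, -(α + γ)⟫ = ‖α + β‖ * ‖-(α + γ)‖ := by
      rw [inner_neg_right, norm_neg, hxs, hyt]; linarith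
    have := inner_eq_norm_mul_iff_real.1 heq
    rwa [norm_neg, hxs, hyt, smul_neg] at this
  have key := congrArg (⟪·, α⟫) hanti
  simp only [real_inner_smul_left, inner_neg_left] at key
  rw [real_inner_add_left_self_of_norm_eq (hα1.trans hβ1.symm),
    real_inner_add_left_self_of_norm_eq (hα1.trans hγ1.symm), hxs, hyt] at key
  nlinarith [mul_pos hs ht]

theorem real_inner_add_sub_eq_norm_sq_sub_norm_sq (x y : E) :
    ⟪x + y, x - y⟫ = ‖x‖ ^ 2 - ‖y‖ ^ 2 := by
  rw [inner_add_left, inner_sub_right, inner_sub_right, real_inner_comm y x,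
    real_inner_self_eq_norm_sq, real_inner_self_eq_norm_sq]
  ring

theorem sq_add_norm_sq_middle_lt_outer {ta tb tc te : ℝ} {α β γ ε : E} (hα : ‖α‖ ≤ 1)
    (hβ : ‖β‖ ≤ 1) (hγ : ‖γ‖ ≤ 1) (hε : ‖ε‖ ≤ 1) (hab : ta < tb) (hbc : tb < tc) (hce : tc < te)
    (hαβ : 4 ≤ (tb - ta) ^ 2 + ‖β - α‖ ^ 2) (hαγ : 4 ≤ (tc - ta) ^ 2 + ‖γ - α‖ ^ 2)
    (hβε : 4 ≤ (te - tb) ^ 2 + ‖ε - β‖ ^ 2) (hγε : 4 ≤ (te - tc) ^ 2 + ‖ε - γ‖ ^ 2) :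
    (tc - tb) ^ 2 + ‖γ - β‖ ^ 2 < (te - ta) ^ 2 + ‖ε - α‖ ^ 2 := by
  have inner_le {x y : E} {s t : ℝ} (hx : ‖x‖ ≤ s) (hy : ‖y‖ ≤ t) : |⟪x, y⟫| ≤ s * t :=
    (abs_real_inner_le_norm x y).trans
      (mul_le_mul hx hy (norm_nonneg y) ((norm_nonneg x).trans hx))
  have hs₁ := norm_add_le_of_four_le_sq_add_norm_sub_sq hα hβ (by linarith) hαβ
  have hs₃ := norm_add_le_of_four_le_sq_add_norm_sub_sq hγ hε (by linarith) hγε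
  have hs₄ := norm_add_le_of_four_le_sq_add_norm_sub_sq hα hγ (by linarith) hαγ
  have hs₅ := norm_add_le_of_four_le_sq_add_norm_sub_sq hβ hε (by linarith) hβε
  have h₃₅ := neg_le_of_abs_le (inner_le hs₃ hs₅)
  have h₃₄ := le_of_abs_le (inner_le hs₃ hs₄)
  have h₁₅ := le_of_abs_le (inner_le hs₁ hs₅)
  have h₁₄ := neg_mul_lt_real_inner_add_add hα hβ hγ (sub_pos.2 hab) (by linarith) hαβ hαγ
  have hdiff : ‖ε - α‖ ^ 2 - ‖γ - β‖ ^ 2 =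
      ⟪γ + ε, β + ε⟫ - ⟪γ + ε, α + γ⟫ - ⟪α + β, β + ε⟫ + ⟪α + β, α + γ⟫ := by
    rw [← real_inner_add_sub_eq_norm_sq_sub_norm_sq,
      show ε - α + (γ - β) = γ + ε - (α + β) by abel,
      show ε - α - (γ - β) = β + ε - (α + γ) by abel]
    simp only [inner_sub_left, inner_sub_right]
    ring
  linarith

def lineOffset (p v x : E) : E := x - p - ⟪x - p, v⟫ • v

variable {p v : E}

theorem real_inner_lineOffset (hv : ‖v‖ = 1) (x : E) : ⟪lineOffset p v x, v⟫ = 0 := by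
  rw [lineOffset, inner_sub_left, real_inner_smul_left, real_inner_self_eq_norm_sq, hv]
  ring

theorem lineOffset_add_smul (hv : ‖v‖ = 1) (t : ℝ) : lineOffset p v (p + t • v) = 0 := by
  rw [lineOffset, add_sub_cancel_left, real_inner_smul_left, real_inner_self_eq_norm_sq, hv]
  simp

theorem dist_sq_eq_sq_add_norm_lineOffset_sub_sq (hv : ‖v‖ = 1) (x y : E) :
    dist x y ^ 2 = (⟪y - p, v⟫ - ⟪x - p, v⟫) ^ 2 +
      ‖lineOffset p v y - lineOffset p v x‖ ^ 2 := by
  have hdecomp : y - x = (⟪y - p, v⟫ - ⟪x - p, v⟫) • v +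
      (lineOffset p v y - lineOffset p v x) := by
    simp only [lineOffset, sub_smul]
    abel
  have horth : ⟪(⟪y - p, v⟫ - ⟪x - p, v⟫) • v, lineOffset p v y - lineOffset p v x⟫ = 0 := by
    rw [real_inner_smul_left, inner_sub_right, real_inner_comm (lineOffset p v y),
      real_inner_comm (lineOffset p v x), real_inner_lineOffset hv, real_inner_lineOffset hv]
    ring
  rw [dist_comm, dist_eq_norm, hdecomp, sq, sq, sq, norm_add_sq_eq_norm_sq_add_norm_sq_real horth,
    norm_smul, hv, Real.norm_eq_abs, mul_one, abs_mul_abs_self]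

theorem norm_lineOffset_le_of_dist_le (hv : ‖v‖ = 1) {x : E} {r : ℝ}
    (h : ∃ t : ℝ, dist (p + t • v) x ≤ r) : ‖lineOffset p v x‖ ≤ r := by
  obtain ⟨t, ht⟩ := h
  have hsq := dist_sq_eq_sq_add_norm_lineOffset_sub_sq (p := p) hv (p + t • v) x
  rw [lineOffset_add_smul hv, sub_zero] at hsq
  nlinarith [norm_nonneg (lineOffset p v x), dist_nonneg (x := p + t • v) (y := x)]

theorem dist_lt_dist_of_transversal (hv : ‖v‖ = 1) {a b c e : E}
    (hab : 2 ≤ dist a b) (hac : 2 ≤ dist a c) (hbe : 2 ≤ dist b e) (hce : 2 ≤ dist c e)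
    (hA : ∃ t : ℝ, dist (p + t • v) a ≤ 1) (hB : ∃ t : ℝ, dist (p + t • v) b ≤ 1)
    (hC : ∃ t : ℝ, dist (p + t • v) c ≤ 1) (hD : ∃ t : ℝ, dist (p + t • v) e ≤ 1)
    (h₁ : ⟪a - p, v⟫ < ⟪b - p, v⟫) (h₂ : ⟪b - p, v⟫ < ⟪c - p, v⟫)
    (h₃ : ⟪c - p, v⟫ < ⟪e - p, v⟫) :
    dist b c < dist a e := by
  have sep {x y : E} (h : 2 ≤ dist x y) :
      4 ≤ (⟪y - p, v⟫ - ⟪x - p, v⟫) ^ 2 + ‖lineOffset p v y - lineOffset p v x‖ ^ 2 := by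
    rw [← dist_sq_eq_sq_add_norm_lineOffset_sub_sq hv]
    nlinarith
  have hsq := sq_add_norm_sq_middle_lt_outer (norm_lineOffset_le_of_dist_le hv hA)
    (norm_lineOffset_le_of_dist_le hv hB) (norm_lineOffset_le_of_dist_le hv hC)
    (norm_lineOffset_le_of_dist_le hv hD) h₁ h₂ h₃ (sep hab) (sep hac) (sep hbe) (sep hce)
  rw [← dist_sq_eq_sq_add_norm_lineOffset_sub_sq hv,
    ← dist_sq_eq_sq_add_norm_lineOffset_sub_sq hv] at hsq
  exact lt_of_pow_lt_pow_left₀ 2 dist_nonneg hsq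

end

theorem no_ABCD_and_BADC_general {d : ℕ} (a b c e : EuclideanSpace ℝ (Fin d))
    (hab : 2 ≤ dist a b) (hac : 2 ≤ dist a c)
    (hbe : 2 ≤ dist b e) (hce : 2 ≤ dist c e)
    (p v : EuclideanSpace ℝ (Fin d)) (hv : ‖v‖ = 1)
    (hA : ∃ t : ℝ, dist (p + t • v) a ≤ 1)
    (hB : ∃ t : ℝ, dist (p + t • v) b ≤ 1)
    (hC : ∃ t : ℝ, dist (p + t • v) c ≤ 1)
    (hD : ∃ t : ℝ, dist (p + t • v) e ≤ 1)
    (hord1 : (inner ℝ (a - p) v : ℝ) < inner ℝ (b - p) v)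
    (hord2 : (inner ℝ (b - p) v : ℝ) < inner ℝ (c - p) v)
    (hord3 : (inner ℝ (c - p) v : ℝ) < inner ℝ (e - p) v)
    (q w : EuclideanSpace ℝ (Fin d)) (hw : ‖w‖ = 1)
    (hA' : ∃ t : ℝ, dist (q + t • w) a ≤ 1)
    (hB' : ∃ t : ℝ, dist (q + t • w) b ≤ 1)
    (hC' : ∃ t : ℝ, dist (q + t • w) c ≤ 1)
    (hD' : ∃ t : ℝ, dist (q + t • w) e ≤ 1)
    (hord1' : (inner ℝ (b - q) w : ℝ) < inner ℝ (a - q) w)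
    (hord2' : (inner ℝ (a - q) w : ℝ) < inner ℝ (e - q) w)
    (hord3' : (inner ℝ (e - q) w : ℝ) < inner ℝ (c - q) w) :
    False := by
  have hABCD := dist_lt_dist_of_transversal hv hab hac hbe hce hA hB hC hD hord1 hord2 hord3
  have hBADC := dist_lt_dist_of_transversal hw (dist_comm a b ▸ hab) hbe hac
    (dist_comm c e ▸ hce) hB' hA' hD' hC' hord1' hord2' hord3'
  exact lt_asymm hABCD hBADC

/-- four non-overlapping unit balls cannot admit both a line transversal in the
order `A B C D` and one in the order `B A D C`. -/
theorem no_ABCD_and_BADC {d : ℕ} (a b c e : EuclideanSpace ℝ (Fin d))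
    (hab : 2 ≤ dist a b) (hac : 2 ≤ dist a c) (hae : 2 ≤ dist a e)
    (hbc : 2 ≤ dist b c) (hbe : 2 ≤ dist b e) (hce : 2 ≤ dist c e)
    (p v : EuclideanSpace ℝ (Fin d)) (hv : ‖v‖ = 1)
    (hA : ∃ t : ℝ, dist (p + t • v) a ≤ 1)
    (hB : ∃ t : ℝ, dist (p + t • v) b ≤ 1)
    (hC : ∃ t : ℝ, dist (p + t • v) c ≤ 1)
    (hD : ∃ t : ℝ, dist (p + t • v) e ≤ 1)
    (hord1 : (inner ℝ (a - p) v : ℝ) < inner ℝ (b - p) v)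
    (hord2 : (inner ℝ (b - p) v : ℝ) < inner ℝ (c - p) v)
    (hord3 : (inner ℝ (c - p) v : ℝ) < inner ℝ (e - p) v)
    (q w : EuclideanSpace ℝ (Fin d)) (hw : ‖w‖ = 1)
    (hA' : ∃ t : ℝ, dist (q + t • w) a ≤ 1)
    (hB' : ∃ t : ℝ, dist (q + t • w) b ≤ 1)
    (hC' : ∃ t : ℝ, dist (q + t • w) c ≤ 1)
    (hD' : ∃ t : ℝ, dist (q + t • w) e ≤ 1)
    (hord1' : (inner ℝ (b - q) w : ℝ) < inner ℝ (a - q) w)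
    (hord2' : (inner ℝ (a - q) w : ℝ) < inner ℝ (e - q) w)
    (hord3' : (inner ℝ (e - q) w : ℝ) < inner ℝ (c - q) w) :
    False :=
  no_ABCD_and_BADC_general a b c e hab hac hbe hce p v hv hA hB hC hD hord1 hord2 hord3 q w hw hA'
    hB' hC' hD' hord1' hord2' hord3'
end

section
/- Let C be a solid cylinder in ℝ^d of radius 1 whose axis segment has length less than s√2 for some natural number s ≥ 1. Then C contains at most 2s points with pairwise distances at least 2. -/
/-!
Cut the axis into `s` slabs of length `√2`; it suffices to show that a slab of the cylinder
holds at most two points at mutual distance `≥ 2`. For three such points with axial coordinates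
`t₁ ≤ t₂ ≤ t₃`, put `a = t₂ - t₁`, `b = t₃ - t₂`. The radial parts lie in the unit ball and are
nearly antipodal in pairs: `2⟪uᵢ, uⱼ⟫ ≤ (tⱼ - tᵢ)² - 2`. Hence `‖u₂ + u₃‖ ≤ b`, and Cauchy–Schwarz
against `u₁` gives `4 ≤ a² + (a + b)² + 2b`; symmetrically `4 ≤ b² + (a + b)² + 2a`. These two
inequalities force `(a + b)² ≥ 2`, so the three points span an axial length of at least `√2`.
-/

open Real RealInnerProductSpace

theorem two_le_sq_add_of_four_le {a b : ℝ} (ha : 0 ≤ a) (hb : 0 ≤ b)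
    (h₁ : 4 ≤ a ^ 2 + (a + b) ^ 2 + 2 * b) (h₂ : 4 ≤ b ^ 2 + (a + b) ^ 2 + 2 * a) :
    2 ≤ (a + b) ^ 2 := by
  by_contra! hγ
  set γ := a + b
  have hγ_lt : γ < 3 / 2 := by nlinarith
  set D := 5 - 2 * γ - γ ^ 2
  have hD : 0 < D := by nlinarith
  have ha_sq : D ≤ (1 - a) ^ 2 := by nlinarith
  have hb_sq : D ≤ (1 - b) ^ 2 := by nlinarith
  -- `a > 1` would give `(1 - a)² ≤ (γ - 1)² < D`.
  have ha_le : a ≤ 1 := by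
    by_contra! ha1
    nlinarith
  have hb_le : b ≤ 1 := by
    by_contra! hb1
    nlinarith
  have hprod : D ≤ (1 - a) * (1 - b) := by
    have : D * D ≤ ((1 - a) * (1 - b)) ^ 2 := by
      rw [mul_pow]; exact mul_le_mul ha_sq hb_sq hD.le (sq_nonneg _)
    nlinarith [mul_nonneg (sub_nonneg.2 ha_le) (sub_nonneg.2 hb_le)]
  have hamgm : 4 * ((1 - a) * (1 - b)) ≤ (2 - γ) ^ 2 := by nlinarith [sq_nonneg (a - b)]
  -- Together: `(2 - γ)² ≥ 4D`, i.e. `5γ² + 4γ ≥ 16`, impossible when `γ² < 2` and `γ < 3/2`.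
  nlinarith

section UnitBall

variable {E : Type*} [NormedAddCommGroup E] [InnerProductSpace ℝ E] {u w z : E}

theorem two_mul_inner_le_of_four_sub_le_norm_sub_sq {c : ℝ} (hu : ‖u‖ ≤ 1) (hw : ‖w‖ ≤ 1)
    (h : 4 - c ≤ ‖u - w‖ ^ 2) : 2 * ⟪u, w⟫ ≤ c - 2 := by
  nlinarith [norm_sub_sq_real u w, norm_nonneg u, norm_nonneg w]

theorem norm_add_le_of_four_sub_sq_le_norm_sub_sq {b : ℝ} (hb : 0 ≤ b)
    (hw : ‖w‖ ≤ 1) (hz : ‖z‖ ≤ 1) (h : 4 - b ^ 2 ≤ ‖w - z‖ ^ 2) : ‖w + z‖ ≤ b := by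
  rw [← pow_le_pow_iff_left₀ (norm_nonneg _) hb two_ne_zero, norm_add_sq_real]
  nlinarith [two_mul_inner_le_of_four_sub_le_norm_sub_sq hw hz h, norm_nonneg w, norm_nonneg z]

theorem four_le_sq_add_sq_add_two_mul {a b : ℝ} (hb : 0 ≤ b) (hu : ‖u‖ ≤ 1) (hw : ‖w‖ ≤ 1)
    (hz : ‖z‖ ≤ 1) (huw : 4 - a ^ 2 ≤ ‖u - w‖ ^ 2) (hwz : 4 - b ^ 2 ≤ ‖w - z‖ ^ 2)
    (huz : 4 - (a + b) ^ 2 ≤ ‖u - z‖ ^ 2) : 4 ≤ a ^ 2 + (a + b) ^ 2 + 2 * b := by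
  have hwz_add : ‖w + z‖ ≤ b := norm_add_le_of_four_sub_sq_le_norm_sub_sq hb hw hz hwz
  have hcs : -b ≤ ⟪u, w⟫ + ⟪u, z⟫ := by
    rw [← inner_add_right]
    have := neg_le_of_abs_le (abs_real_inner_le_norm u (w + z))
    nlinarith [norm_nonneg u, norm_nonneg (w + z)]
  linarith [two_mul_inner_le_of_four_sub_le_norm_sub_sq hu hw huw,
    two_mul_inner_le_of_four_sub_le_norm_sub_sq hu hz huz]

theorem two_le_sq_add_of_norm_le_one {a b : ℝ} (ha : 0 ≤ a) (hb : 0 ≤ b) (hu : ‖u‖ ≤ 1)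
    (hw : ‖w‖ ≤ 1) (hz : ‖z‖ ≤ 1) (huw : 4 - a ^ 2 ≤ ‖u - w‖ ^ 2)
    (hwz : 4 - b ^ 2 ≤ ‖w - z‖ ^ 2) (huz : 4 - (a + b) ^ 2 ≤ ‖u - z‖ ^ 2) :
    2 ≤ (a + b) ^ 2 := by
  refine two_le_sq_add_of_four_le ha hb
    (four_le_sq_add_sq_add_two_mul hb hu hw hz huw hwz huz) ?_
  rw [add_comm a b] at huz ⊢
  rw [norm_sub_rev] at huw hwz huz
  exact four_le_sq_add_sq_add_two_mul ha hz hw hu hwz huw huz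

end UnitBall

section Cylinder

variable {E : Type*} [NormedAddCommGroup E] [InnerProductSpace ℝ E] (p v : E)

def axialCoord (x : E) : ℝ := ⟪x - p, v⟫

def radialPart (x : E) : E := x - p - axialCoord p v x • v

variable {p v}

theorem dist_sq_eq_axialCoord_sub_sq_add (hv : ‖v‖ = 1) (x y : E) :
    dist x y ^ 2 = (axialCoord p v x - axialCoord p v y) ^ 2 +
      ‖radialPart p v x - radialPart p v y‖ ^ 2 := by
  have hvv : ⟪v, v⟫ = 1 := by rw [real_inner_self_eq_norm_sq, hv, one_pow]
  have horth : ⟪(axialCoord p v x - axialCoord p v y) • v,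
      radialPart p v x - radialPart p v y⟫ = 0 := by
    simp only [radialPart, axialCoord, real_inner_smul_left, inner_sub_right,
      real_inner_smul_right, hvv, real_inner_comm v]
    ring
  have hsplit : x - y = (axialCoord p v x - axialCoord p v y) • v +
      (radialPart p v x - radialPart p v y) := by
    simp only [radialPart]; module
  rw [dist_eq_norm, hsplit, norm_add_sq_real, horth, mul_zero, add_zero, norm_smul, hv, mul_one,
    Real.norm_eq_abs, sq_abs]

theorem four_sub_sq_le_norm_radialPart_sub_sq (hv : ‖v‖ = 1) {x y : E} (h : 2 ≤ dist x y) :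
    4 - (axialCoord p v y - axialCoord p v x) ^ 2 ≤
      ‖radialPart p v x - radialPart p v y‖ ^ 2 := by
  nlinarith [dist_sq_eq_axialCoord_sub_sq_add (p := p) hv x y]

theorem two_le_sq_axialCoord_sub (hv : ‖v‖ = 1) {x y z : E}
    (hx : ‖radialPart p v x‖ ≤ 1) (hy : ‖radialPart p v y‖ ≤ 1) (hz : ‖radialPart p v z‖ ≤ 1)
    (hxy : 2 ≤ dist x y) (hyz : 2 ≤ dist y z) (hxz : 2 ≤ dist x z)
    (htxy : axialCoord p v x ≤ axialCoord p v y) (htyz : axialCoord p v y ≤ axialCoord p v z) :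
    2 ≤ (axialCoord p v z - axialCoord p v x) ^ 2 := by
  have h := two_le_sq_add_of_norm_le_one (sub_nonneg.2 htxy) (sub_nonneg.2 htyz) hx hy hz
    (four_sub_sq_le_norm_radialPart_sub_sq hv hxy) (four_sub_sq_le_norm_radialPart_sub_sq hv hyz)
  rw [sub_add_sub_cancel'] at h
  exact h (four_sub_sq_le_norm_radialPart_sub_sq hv hxz)

theorem card_le_two_of_axialCoord_sub_lt (hv : ‖v‖ = 1) (S : Finset E)
    (hrad : ∀ x ∈ S, ‖radialPart p v x‖ ≤ 1)
    (hsep : ∀ x ∈ S, ∀ y ∈ S, x ≠ y → 2 ≤ dist x y)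
    (hwidth : ∀ x ∈ S, ∀ y ∈ S, axialCoord p v y - axialCoord p v x < √2) :
    S.card ≤ 2 := by
  classical
  by_contra! hcard
  obtain ⟨x, hxS, hx_min⟩ := S.exists_min_image (axialCoord p v) (by
    rw [← Finset.card_pos]; omega)
  obtain ⟨z, hzS, hz_max⟩ := (S.erase x).exists_max_image (axialCoord p v) (by
    rw [← Finset.card_pos, Finset.card_erase_of_mem hxS]; omega)
  obtain ⟨y, hyS⟩ : ((S.erase x).erase z).Nonempty := by
    rw [← Finset.card_pos, Finset.card_erase_of_mem hzS, Finset.card_erase_of_mem hxS]; omega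
  obtain ⟨hyz, hyx, hy⟩ : y ≠ z ∧ y ≠ x ∧ y ∈ S := by simpa using hyS
  obtain ⟨hzx, hz⟩ : z ≠ x ∧ z ∈ S := by simpa using hzS
  have h2 := two_le_sq_axialCoord_sub hv (hrad x hxS) (hrad y hy) (hrad z hz)
    (hsep x hxS y hy hyx.symm) (hsep y hy z hz hyz) (hsep x hxS z hz hzx.symm)
    (hx_min y hy) (hz_max y (Finset.mem_of_mem_erase hyS))
  have h0 : 0 ≤ axialCoord p v z - axialCoord p v x := sub_nonneg.2 (hx_min z hz)
  nlinarith [hwidth x hxS z hz, Real.sq_sqrt (zero_le_two (α := ℝ))]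

end Cylinder

theorem cylinder_capacity_general {d : ℕ} (s : ℕ)
    (p v : EuclideanSpace ℝ (Fin d)) (hv : ‖v‖ = 1) (L : ℝ)
    (hL : L < s * Real.sqrt 2)
    (P : Finset (EuclideanSpace ℝ (Fin d)))
    (hP : ∀ x ∈ P, 0 ≤ (inner ℝ (x - p) v : ℝ) ∧ (inner ℝ (x - p) v : ℝ) ≤ L ∧
      ‖x - p - (inner ℝ (x - p) v : ℝ) • v‖ ≤ 1)
    (hsep : ∀ x ∈ P, ∀ y ∈ P, x ≠ y → 2 ≤ dist x y) :
    P.card ≤ 2 * s := by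
  have hsqrt : 0 < √2 := by positivity
  set slab : EuclideanSpace ℝ (Fin d) → ℤ := fun x => ⌊axialCoord p v x / √2⌋
  have hslab : ∀ x ∈ P, slab x ∈ Finset.Ico 0 (s : ℤ) := fun x hx => by
    rw [Finset.mem_Ico, Int.floor_nonneg, Int.floor_lt, Int.cast_natCast, div_lt_iff₀ hsqrt]
    exact ⟨div_nonneg (hP x hx).1 hsqrt.le, (hP x hx).2.1.trans_lt hL⟩
  have hfiber : ∀ k ∈ Finset.Ico 0 (s : ℤ), (P.filter (slab · = k)).card ≤ 2 := by
    intro k _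
    have hsub := Finset.filter_subset (slab · = k) P
    refine card_le_two_of_axialCoord_sub_lt hv _ (fun x hx => (hP x (hsub hx)).2.2)
      (fun x hx y hy => hsep x (hsub hx) y (hsub hy)) (fun x hx y hy => ?_)
    rw [Finset.mem_filter] at hx hy
    have := (abs_sub_lt_iff.1 (Int.abs_sub_lt_one_of_floor_eq_floor (hy.2.trans hx.2.symm))).1
    rwa [← sub_div, div_lt_one hsqrt] at this
  simpa using Finset.card_le_mul_card_image_of_maps_to hslab 2 hfiber

/-- a solid cylinder of radius 1 whose axis segment has length `< s√2`
contains at most `2s` points with pairwise distances at least 2. -/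
theorem cylinder_capacity {d : ℕ} (s : ℕ) (hs : 1 ≤ s)
    (p v : EuclideanSpace ℝ (Fin d)) (hv : ‖v‖ = 1) (L : ℝ) (hL0 : 0 ≤ L)
    (hL : L < s * Real.sqrt 2)
    (P : Finset (EuclideanSpace ℝ (Fin d)))
    (hP : ∀ x ∈ P, 0 ≤ (inner ℝ (x - p) v : ℝ) ∧ (inner ℝ (x - p) v : ℝ) ≤ L ∧
      ‖x - p - (inner ℝ (x - p) v : ℝ) • v‖ ≤ 1)
    (hsep : ∀ x ∈ P, ∀ y ∈ P, x ≠ y → 2 ≤ dist x y) :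
    P.card ≤ 2 * s :=
  cylinder_capacity_general s p v hv L hL P hP hsep
end

section
/- Given three non-overlapping unit balls A, B, C in ℝ^d and a directed line ℓ meeting them in the order A, B, C, the angle between the direction of ℓ and the vector c − a is less than π/4. -/
/-!
Project everything onto the hyperplane orthogonal to `v`: the centres become points `x, y, z`
of the closed unit ball, and consecutive centres are separated by heights `s = ⟪b - a, v⟫` and
`t = ⟪c - b, v⟫`. The parallelogram law turns `4 ≤ s² + ‖y - x‖²` into `‖x + y‖ ≤ s`, and likewise
`‖y + z‖ ≤ t`, so the triangle inequality through `-y` gives `‖z - x‖ ≤ s + t`. Equality would force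
`-y` to be a unit vector lying between two points of the unit ball, which strict convexity only
allows at an endpoint, where `s` or `t` vanishes. Hence `‖c - a‖² = ‖z - x‖² + (s + t)² < 2 (s + t)²`,
i.e. `cos ∠(v, c - a) > 1 / √2`.
-/

open Real InnerProductGeometry
open scoped RealInnerProductSpace

section InnerProductSpace

variable {F : Type*} [NormedAddCommGroup F] [InnerProductSpace ℝ F]

def perpComponent (v w : F) : F := w - ⟪w, v⟫ • v

theorem perpComponent_sub (v w₁ w₂ : F) :
    perpComponent v (w₁ - w₂) = perpComponent v w₁ - perpComponent v w₂ := by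
  simp only [perpComponent, inner_sub_left, sub_smul]
  abel

theorem norm_sub_smul_sq {v : F} (hv : ‖v‖ = 1) (w : F) (s : ℝ) :
    ‖w - s • v‖ ^ 2 = ‖perpComponent v w‖ ^ 2 + (⟪w, v⟫ - s) ^ 2 := by
  have hperp : ⟪perpComponent v w, v⟫ = 0 := by
    rw [perpComponent, inner_sub_left, real_inner_smul_left, real_inner_self_eq_norm_sq, hv]
    ring
  have hsplit : w - s • v = perpComponent v w + (⟪w, v⟫ - s) • v := by
    rw [perpComponent, sub_smul]
    abel
  rw [hsplit, norm_add_sq_real, real_inner_smul_right, hperp, norm_smul, norm_eq_abs, hv,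
    mul_one, sq_abs]
  ring

theorem norm_perpComponent_le_dist {v : F} (hv : ‖v‖ = 1) (p w : F) (s : ℝ) :
    ‖perpComponent v (w - p)‖ ≤ dist (p + s • v) w := by
  have hdist : dist (p + s • v) w = ‖(w - p) - s • v‖ := by
    rw [dist_eq_norm, ← norm_neg]
    congr 1
    abel
  rw [hdist, ← pow_le_pow_iff_left₀ (norm_nonneg _) (norm_nonneg _) two_ne_zero,
    norm_sub_smul_sq hv]
  nlinarith

theorem dist_sq_eq_norm_perpComponent_sq_add {v : F} (hv : ‖v‖ = 1) (p w₁ w₂ : F) :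
    dist w₁ w₂ ^ 2 =
      ‖perpComponent v (w₂ - p) - perpComponent v (w₁ - p)‖ ^ 2 + ⟪w₂ - w₁, v⟫ ^ 2 := by
  have := norm_sub_smul_sq hv (w₂ - w₁) 0
  rw [zero_smul, sub_zero, sub_zero] at this
  rw [← perpComponent_sub, sub_sub_sub_cancel_right, dist_comm, dist_eq_norm, this]

section UnitBall

variable {x y z : F} {s t : ℝ}

theorem norm_add_le_of_four_le (hx : ‖x‖ ≤ 1) (hy : ‖y‖ ≤ 1) (hs : 0 ≤ s)
    (hxy : 4 ≤ s ^ 2 + ‖y - x‖ ^ 2) : ‖x + y‖ ≤ s := by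
  have := parallelogram_law_with_norm ℝ x y
  rw [norm_sub_rev] at hxy
  nlinarith [norm_nonneg x, norm_nonneg y, norm_nonneg (x + y)]

theorem norm_eq_one_of_norm_add_eq (hx : ‖x‖ ≤ 1) (hy : ‖y‖ ≤ 1)
    (hxy : 4 ≤ s ^ 2 + ‖y - x‖ ^ 2) (h : ‖x + y‖ = s) : ‖y‖ = 1 := by
  have := parallelogram_law_with_norm ℝ x y
  rw [norm_sub_rev, ← h] at hxy
  nlinarith [norm_nonneg x, norm_nonneg y]

theorem norm_sub_lt_add_of_four_le (hx : ‖x‖ ≤ 1) (hy : ‖y‖ ≤ 1) (hz : ‖z‖ ≤ 1)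
    (hs : 0 < s) (ht : 0 < t) (hxy : 4 ≤ s ^ 2 + ‖y - x‖ ^ 2)
    (hyz : 4 ≤ t ^ 2 + ‖z - y‖ ^ 2) : ‖z - x‖ < s + t := by
  by_contra! hge
  have hxy_le := norm_add_le_of_four_le hx hy hs.le hxy
  have hyz_le := norm_add_le_of_four_le hy hz ht.le hyz
  have htri : ‖z - x‖ ≤ ‖x + y‖ + ‖y + z‖ := by
    rw [show z - x = (y + z) - (x + y) by abel]
    linarith [norm_sub_le (y + z) (x + y)]
  have hxy_eq : ‖x + y‖ = s := by linarith
  have hyz_eq : ‖y + z‖ = t := by linarith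
  have hy_one := norm_eq_one_of_norm_add_eq hx hy hxy hxy_eq
  have hbtw : Wbtw ℝ x (-y) z := by
    rw [← dist_add_dist_eq_iff, dist_eq_norm, dist_eq_norm, dist_eq_norm, sub_neg_eq_add,
      ← neg_add', norm_neg, norm_sub_rev]
    linarith
  have hnot_sbtw : ¬Sbtw ℝ x (-y) z := fun h => by
    have := h.dist_lt_max_dist 0
    simp only [dist_zero_right, norm_neg] at this
    exact this.not_ge (by rw [hy_one]; exact max_le hx hz)
  obtain hxy0 | hyz0 : -y = x ∨ -y = z := by
    by_contra! hne
    exact hnot_sbtw ⟨hbtw, hne⟩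
  · rw [← hxy0, neg_add_cancel, norm_zero] at hxy_eq
    exact hs.ne hxy_eq
  · rw [← hyz0, add_neg_cancel, norm_zero] at hyz_eq
    exact ht.ne hyz_eq

end UnitBall

theorem angle_lt_pi_div_four_of_sq_lt {x y : F} (hpos : 0 < ⟪x, y⟫)
    (h : ‖x‖ ^ 2 * ‖y‖ ^ 2 < 2 * ⟪x, y⟫ ^ 2) : angle x y < π / 4 := by
  have hx : x ≠ 0 := by rintro rfl; simp at hpos
  have hy : y ≠ 0 := by rintro rfl; simp at hpos
  have hxy : 0 < ‖x‖ * ‖y‖ := by positivity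
  have hcos : √2 / 2 < ⟪x, y⟫ / (‖x‖ * ‖y‖) := by
    rw [lt_div_iff₀ hxy, div_mul_eq_mul_div, div_lt_iff₀ two_pos]
    nlinarith [sq_sqrt (zero_le_two (α := ℝ)), sqrt_nonneg 2]
  have hpi : arccos (√2 / 2) = π / 4 :=
    arccos_eq_of_eq_cos (by positivity) (by linarith [pi_pos]) cos_pi_div_four.symm
  rw [angle, ← hpi]
  exact arccos_lt_arccos (by linarith [sqrt_nonneg 2]) hcos
    (abs_le.mp (abs_real_inner_div_norm_mul_norm_le_one x y)).2

end InnerProductSpace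

theorem angle_direction_lt_pi_div_four_general {d : ℕ} (a b c : EuclideanSpace ℝ (Fin d))
    (hab : 2 ≤ dist a b) (hbc : 2 ≤ dist b c)
    (p v : EuclideanSpace ℝ (Fin d)) (hv : ‖v‖ = 1)
    (hA : ∃ t : ℝ, dist (p + t • v) a ≤ 1)
    (hB : ∃ t : ℝ, dist (p + t • v) b ≤ 1)
    (hC : ∃ t : ℝ, dist (p + t • v) c ≤ 1)
    (hord1 : (inner ℝ a v : ℝ) < inner ℝ b v)
    (hord2 : (inner ℝ b v : ℝ) < inner ℝ c v) :
    InnerProductGeometry.angle v (c - a) < π / 4 := by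
  obtain ⟨ta, hta⟩ := hA
  obtain ⟨tb, htb⟩ := hB
  obtain ⟨tc, htc⟩ := hC
  have hx := (norm_perpComponent_le_dist hv p a ta).trans hta
  have hy := (norm_perpComponent_le_dist hv p b tb).trans htb
  have hz := (norm_perpComponent_le_dist hv p c tc).trans htc
  have hs : 0 < ⟪b - a, v⟫ := by rw [inner_sub_left]; linarith
  have ht : 0 < ⟪c - b, v⟫ := by rw [inner_sub_left]; linarith
  have hst : ⟪b - a, v⟫ + ⟪c - b, v⟫ = ⟪c - a, v⟫ := by simp only [inner_sub_left]; ring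
  have hab_sq := dist_sq_eq_norm_perpComponent_sq_add hv p a b
  have hbc_sq := dist_sq_eq_norm_perpComponent_sq_add hv p b c
  have hac_sq := dist_sq_eq_norm_perpComponent_sq_add hv p a c
  have hlt := norm_sub_lt_add_of_four_le hx hy hz hs ht (by nlinarith) (by nlinarith)
  rw [hst] at hlt
  have hlt_sq := pow_lt_pow_left₀ hlt (norm_nonneg _) two_ne_zero
  rw [angle_comm]
  refine angle_lt_pi_div_four_of_sq_lt (by linarith) ?_
  rw [hv, ← dist_eq_norm', hac_sq]
  linarith

/-- if a directed line meets three non-overlapping unit balls in the order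
`A B C`, then the angle between its direction and `c - a` is less than `π/4`. -/
theorem angle_direction_lt_pi_div_four {d : ℕ} (a b c : EuclideanSpace ℝ (Fin d))
    (hab : 2 ≤ dist a b) (hac : 2 ≤ dist a c) (hbc : 2 ≤ dist b c)
    (p v : EuclideanSpace ℝ (Fin d)) (hv : ‖v‖ = 1)
    (hA : ∃ t : ℝ, dist (p + t • v) a ≤ 1)
    (hB : ∃ t : ℝ, dist (p + t • v) b ≤ 1)
    (hC : ∃ t : ℝ, dist (p + t • v) c ≤ 1)
    (hord1 : (inner ℝ a v : ℝ) < inner ℝ b v)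
    (hord2 : (inner ℝ b v : ℝ) < inner ℝ c v) :
    InnerProductGeometry.angle v (c - a) < π / 4 :=
  angle_direction_lt_pi_div_four_general a b c hab hbc p v hv hA hB hC hord1 hord2
end

section
/- Let three non-overlapping unit balls X, Y, Z in ℝ³ admit a line transversal meeting them in the order X, Y, Z. Then the angles ∠(y x z) and ∠(x z y) of the triangle of centers are acute (strictly less than π/2). -/
/-!
Write `y - x = a • v + u` and `z - x = b • v + w` with `u, w ⊥ v`. The transversal orders the
centers along `v`, so `a b > 0`; non-overlapping gives `a² + ‖u‖² ≥ 4` and `b² + ‖w‖² ≥ 4`;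
and since the line meets the balls `Y` and `Z`, the centers `y` and `z` lie within distance `1`
of it, so `‖u - w‖ ≤ 2`. These force `⟪y - x, z - x⟫ = a b + ⟪u, w⟫ > 0`, i.e. the angle at `x`
is acute; the angle at `z` is the same statement for the reversed order.
-/

open Real EuclideanGeometry

theorem InnerProductGeometry.angle_lt_pi_div_two_of_inner_pos {V : Type*}
    [NormedAddCommGroup V] [InnerProductSpace ℝ V] {a b : V} (h : 0 < inner ℝ a b) :
    angle a b < π / 2 := by
  rw [angle, arccos_lt_pi_div_two]
  exact div_pos h (h.trans_le (real_inner_le_norm a b))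

variable {E : Type*} [NormedAddCommGroup E] [InnerProductSpace ℝ E]

theorem mul_add_inner_pos {a b r : ℝ} {u w : E} (hab : 0 < a * b)
    (hu : r ^ 2 ≤ a ^ 2 + ‖u‖ ^ 2) (hw : r ^ 2 ≤ b ^ 2 + ‖w‖ ^ 2) (huw : ‖u - w‖ ≤ r) :
    0 < a * b + inner ℝ u w := by
  have hinner : ‖u‖ ^ 2 + ‖w‖ ^ 2 - r ^ 2 ≤ 2 * inner ℝ u w := by
    nlinarith [norm_sub_sq_real u w, norm_nonneg (u - w)]
  nlinarith [sq_nonneg (a * b), sq_nonneg (‖u‖ ^ 2 - ‖w‖ ^ 2), sq_nonneg (a ^ 2 - b ^ 2),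
    mul_nonneg (sub_nonneg.2 hu) (sub_nonneg.2 hw)]

theorem inner_eq_mul_add_inner_starProjection_orthogonal {v : E} (hv : ‖v‖ = 1) (a b : E) :
    inner ℝ a b = inner ℝ v a * inner ℝ v b
      + inner ℝ ((ℝ ∙ v)ᗮ.starProjection a) ((ℝ ∙ v)ᗮ.starProjection b) := by
  simp only [Submodule.starProjection_orthogonal_val, Submodule.starProjection_unit_singleton ℝ hv,
    inner_sub_left, inner_sub_right, real_inner_smul_left, real_inner_smul_right,
    real_inner_self_eq_norm_sq, hv, real_inner_comm a v, real_inner_comm b v]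
  ring

theorem norm_starProjection_orthogonal_sub_le {p v y z : E} {s t r r' : ℝ}
    (hy : dist (p + s • v) y ≤ r) (hz : dist (p + t • v) z ≤ r') :
    ‖(ℝ ∙ v)ᗮ.starProjection (y - z)‖ ≤ r + r' := by
  set P := (ℝ ∙ v)ᗮ.starProjection
  have hPv : P v = 0 := Submodule.starProjection_orthogonalComplement_singleton_eq_zero v
  have hsplit : P (y - z) = P (y - (p + s • v)) - P (z - (p + t • v)) := by
    simp only [map_sub, map_add, map_smul, hPv, smul_zero, add_zero]
    abel
  calc ‖P (y - z)‖ ≤ ‖P (y - (p + s • v))‖ + ‖P (z - (p + t • v))‖ := hsplit ▸ norm_sub_le _ _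
    _ ≤ ‖y - (p + s • v)‖ + ‖z - (p + t • v)‖ :=
        add_le_add (Submodule.norm_starProjection_apply_le _ _)
          (Submodule.norm_starProjection_apply_le _ _)
    _ ≤ r + r' := by
        rw [← dist_eq_norm, ← dist_eq_norm, dist_comm y, dist_comm z]
        exact add_le_add hy hz

theorem inner_sub_pos_of_line_meets_balls {p v x y z : E} {r : ℝ} (hv : ‖v‖ = 1)
    (hxy : 2 * r ≤ dist x y) (hxz : 2 * r ≤ dist x z)
    (hY : ∃ s : ℝ, dist (p + s • v) y ≤ r) (hZ : ∃ t : ℝ, dist (p + t • v) z ≤ r)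
    (hsign : 0 < inner ℝ v (y - x) * inner ℝ v (z - x)) :
    0 < inner ℝ (y - x) (z - x) := by
  obtain ⟨s, hs⟩ := hY
  obtain ⟨t, ht⟩ := hZ
  have hr : 0 ≤ r := dist_nonneg.trans hs
  have hsplit := inner_eq_mul_add_inner_starProjection_orthogonal hv
  have hfar : ∀ c : E, 2 * r ≤ dist x c →
      (2 * r) ^ 2 ≤ inner ℝ v (c - x) ^ 2 + ‖(ℝ ∙ v)ᗮ.starProjection (c - x)‖ ^ 2 := by
    intro c hc
    have hc' := hsplit (c - x) (c - x)
    rw [real_inner_self_eq_norm_sq, real_inner_self_eq_norm_sq, ← dist_eq_norm, dist_comm] at hc'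
    calc (2 * r) ^ 2 ≤ dist x c ^ 2 := pow_le_pow_left₀ (by linarith) hc 2
      _ = _ := by rw [hc']; ring
  rw [hsplit]
  refine mul_add_inner_pos hsign (hfar y hxy) (hfar z hxz) ?_
  rw [← map_sub, sub_sub_sub_cancel_right, two_mul]
  exact norm_starProjection_orthogonal_sub_le hs ht

/-- if three non-overlapping unit balls in `ℝ³` admit a line transversal in
the order `X Y Z`, then the angles of the triangle of centers at `x` and at `z` are acute. -/
theorem angles_acute_of_transversal (x y z : EuclideanSpace ℝ (Fin 3))
    (hxy : 2 ≤ dist x y) (hxz : 2 ≤ dist x z) (hyz : 2 ≤ dist y z)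
    (p v : EuclideanSpace ℝ (Fin 3)) (hv : ‖v‖ = 1)
    (hX : ∃ t : ℝ, dist (p + t • v) x ≤ 1)
    (hY : ∃ t : ℝ, dist (p + t • v) y ≤ 1)
    (hZ : ∃ t : ℝ, dist (p + t • v) z ≤ 1)
    (hord1 : (inner ℝ x v : ℝ) < inner ℝ y v)
    (hord2 : (inner ℝ y v : ℝ) < inner ℝ z v) :
    ∠ y x z < π / 2 ∧ ∠ x z y < π / 2 := by
  have hcomp : ∀ c d : EuclideanSpace ℝ (Fin 3),
      inner ℝ v (c - d) = inner ℝ c v - inner ℝ d v := fun c d => by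
    rw [inner_sub_right, real_inner_comm v c, real_inner_comm v d]
  constructor
  · refine InnerProductGeometry.angle_lt_pi_div_two_of_inner_pos
      (inner_sub_pos_of_line_meets_balls (r := 1) hv (by linarith) (by linarith) hY hZ ?_)
    rw [hcomp, hcomp]
    exact mul_pos (by linarith) (by linarith)
  · refine InnerProductGeometry.angle_lt_pi_div_two_of_inner_pos
      (inner_sub_pos_of_line_meets_balls (r := 1) hv (by rw [dist_comm]; linarith)
        (by rw [dist_comm]; linarith) hX hY ?_)
    rw [hcomp, hcomp]
    exact mul_pos_of_neg_of_neg (by linarith) (by linarith)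
end

section
/- If three non-overlapping unit balls X, Y, Z in ℝ³ admit two line transversals, one in the order X, Y, Z and another in the order X, Z, Y, then the triangle of centers x y z is acute and dist(y, z) < 2√2. -/
/-!
Split every vector into its component along the direction `w` of a transversal and its
component orthogonal to `w`. For centers `a, b, c` met by the line in this order the axial
part of `⟪a - b, c - b⟫` is negative, while the orthogonal parts of `a - b` and `c - b` have
length at most `2`; hence `⟪a - b, c - b⟫ < 4`. The two transversals give
`⟪x - y, z - y⟫ < 4` and `⟪x - z, y - z⟫ < 4`. Since
`⟪a - b, c - b⟫ + ⟪a - c, b - c⟫ = dist b c ^ 2`, these two add up to `dist y z ^ 2 ≥ 4`, so both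
are positive (the angles at `y` and `z` are acute) and `dist y z ^ 2 < 8`; likewise
`⟪y - x, z - x⟫ = dist x y ^ 2 - ⟪x - y, z - y⟫ > 0`.
-/

open Real EuclideanGeometry

open scoped RealInnerProductSpace

section Transversal

variable {E : Type*} [NormedAddCommGroup E] [InnerProductSpace ℝ E] {w : E}

theorem inner_eq_inner_mul_inner_add_inner_sub_smul (hw : ‖w‖ = 1) (u v : E) :
    ⟪u, v⟫ = ⟪u, w⟫ * ⟪v, w⟫ + ⟪u - ⟪u, w⟫ • w, v - ⟪v, w⟫ • w⟫ := by
  have hww : ⟪w, w⟫ = 1 := by rw [real_inner_self_eq_norm_sq, hw, one_pow]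
  simp only [inner_sub_left, inner_sub_right, real_inner_smul_left, real_inner_smul_right, hww,
    real_inner_comm w]
  ring

theorem norm_sub_inner_smul_le (hw : ‖w‖ = 1) (u : E) : ‖u - ⟪u, w⟫ • w‖ ≤ ‖u‖ := by
  have h := inner_eq_inner_mul_inner_add_inner_sub_smul hw u u
  rw [real_inner_self_eq_norm_sq, real_inner_self_eq_norm_sq] at h
  exact pow_le_pow_iff_left₀ (norm_nonneg _) (norm_nonneg _) two_ne_zero |>.mp
    (by nlinarith [sq_nonneg ⟪u, w⟫])

theorem norm_sub_inner_smul_le_of_dist_le {q c : E} {r t : ℝ} (hw : ‖w‖ = 1)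
    (h : dist (q + t • w) c ≤ r) : ‖(c - q) - ⟪c - q, w⟫ • w‖ ≤ r := by
  have hww : ⟪w, w⟫ = 1 := by rw [real_inner_self_eq_norm_sq, hw, one_pow]
  have hshift : (c - q) - ⟪c - q, w⟫ • w = (c - (q + t • w)) - ⟪c - (q + t • w), w⟫ • w := by
    simp only [inner_sub_left, inner_add_left, real_inner_smul_left, hww]
    module
  rw [hshift]
  exact (norm_sub_inner_smul_le hw _).trans (by rwa [dist_comm, dist_eq_norm] at h)

theorem inner_sub_lt_of_transversal {q a b c : E} {r : ℝ} (hw : ‖w‖ = 1)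
    (ha : ∃ t : ℝ, dist (q + t • w) a ≤ r) (hb : ∃ t : ℝ, dist (q + t • w) b ≤ r)
    (hc : ∃ t : ℝ, dist (q + t • w) c ≤ r) (hab : ⟪a, w⟫ < ⟪b, w⟫) (hbc : ⟪b, w⟫ < ⟪c, w⟫) :
    ⟪a - b, c - b⟫ < (2 * r) ^ 2 := by
  obtain ⟨_, ha⟩ := ha
  obtain ⟨_, hb⟩ := hb
  obtain ⟨_, hc⟩ := hc
  set P : E → E := fun u => u - ⟪u, w⟫ • w with hP
  have hP_sub (u v : E) : P (u - v) = P (u - q) - P (v - q) := by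
    simp only [hP, inner_sub_left, sub_smul]
    abel
  have hPa : ‖P (a - q)‖ ≤ r := norm_sub_inner_smul_le_of_dist_le hw ha
  have hPb : ‖P (b - q)‖ ≤ r := norm_sub_inner_smul_le_of_dist_le hw hb
  have hPc : ‖P (c - q)‖ ≤ r := norm_sub_inner_smul_le_of_dist_le hw hc
  have hPab : ‖P (a - b)‖ ≤ 2 * r := by
    rw [hP_sub]
    linarith [norm_sub_le (P (a - q)) (P (b - q))]
  have hPcb : ‖P (c - b)‖ ≤ 2 * r := by
    rw [hP_sub]
    linarith [norm_sub_le (P (c - q)) (P (b - q))]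
  have haxial : ⟪a - b, w⟫ * ⟪c - b, w⟫ < 0 := by
    rw [inner_sub_left, inner_sub_left]
    nlinarith
  calc ⟪a - b, c - b⟫ = ⟪a - b, w⟫ * ⟪c - b, w⟫ + ⟪P (a - b), P (c - b)⟫ :=
        inner_eq_inner_mul_inner_add_inner_sub_smul hw _ _
    _ < ‖P (a - b)‖ * ‖P (c - b)‖ := by linarith [real_inner_le_norm (P (a - b)) (P (c - b))]
    _ ≤ (2 * r) * (2 * r) :=
        mul_le_mul hPab hPcb (norm_nonneg _) (by linarith [norm_nonneg (P (a - b))])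
    _ = (2 * r) ^ 2 := by ring

theorem two_mul_inner_sub_sub (a b c : E) :
    2 * ⟪a - b, c - b⟫ = dist a b ^ 2 + dist b c ^ 2 - dist a c ^ 2 := by
  rw [dist_eq_norm, dist_eq_norm, dist_eq_norm, ← sub_sub_sub_cancel_right a c b,
    norm_sub_sq_real (a - b) (c - b), norm_sub_rev b c]
  ring

theorem angle_lt_pi_div_two_of_inner_sub_pos {a b c : E} (h : 0 < ⟪a - b, c - b⟫) :
    ∠ a b c < π / 2 := by
  have hab : a - b ≠ 0 := by rintro h'; simp [h'] at h
  have hcb : c - b ≠ 0 := by rintro h'; simp [h'] at h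
  rw [EuclideanGeometry.angle, InnerProductGeometry.angle, arccos_lt_pi_div_two]
  exact div_pos h (mul_pos (norm_pos_iff.2 hab) (norm_pos_iff.2 hcb))

end Transversal

theorem acute_triangle_of_two_transversals_general (x y z : EuclideanSpace ℝ (Fin 3))
    (hxy : 2 ≤ dist x y) (hyz : 2 ≤ dist y z)
    (p v : EuclideanSpace ℝ (Fin 3)) (hv : ‖v‖ = 1)
    (hX : ∃ t : ℝ, dist (p + t • v) x ≤ 1)
    (hY : ∃ t : ℝ, dist (p + t • v) y ≤ 1)
    (hZ : ∃ t : ℝ, dist (p + t • v) z ≤ 1)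
    (hord1 : (inner ℝ x v : ℝ) < inner ℝ y v)
    (hord2 : (inner ℝ y v : ℝ) < inner ℝ z v)
    (q w : EuclideanSpace ℝ (Fin 3)) (hw : ‖w‖ = 1)
    (hX' : ∃ t : ℝ, dist (q + t • w) x ≤ 1)
    (hY' : ∃ t : ℝ, dist (q + t • w) y ≤ 1)
    (hZ' : ∃ t : ℝ, dist (q + t • w) z ≤ 1)
    (hord1' : (inner ℝ x w : ℝ) < inner ℝ z w)
    (hord2' : (inner ℝ z w : ℝ) < inner ℝ y w) :
    (∠ y x z < π / 2 ∧ ∠ x y z < π / 2 ∧ ∠ x z y < π / 2) ∧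
      dist y z < 2 * Real.sqrt 2 := by
  have hy : ⟪x - y, z - y⟫ < (2 * 1) ^ 2 := inner_sub_lt_of_transversal hv hX hY hZ hord1 hord2
  have hz : ⟪x - z, y - z⟫ < (2 * 1) ^ 2 :=
    inner_sub_lt_of_transversal hw hX' hZ' hY' hord1' hord2'
  have hy_eq := two_mul_inner_sub_sub x y z
  have hz_eq := two_mul_inner_sub_sub x z y
  have hx_eq := two_mul_inner_sub_sub y x z
  rw [dist_comm z y] at hz_eq
  rw [dist_comm y x] at hx_eq
  have hxy_sq : 2 ^ 2 ≤ dist x y ^ 2 := pow_le_pow_left₀ zero_le_two hxy 2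
  have hyz_sq : 2 ^ 2 ≤ dist y z ^ 2 := pow_le_pow_left₀ zero_le_two hyz 2
  refine ⟨⟨?_, ?_, ?_⟩, ?_⟩
  · exact angle_lt_pi_div_two_of_inner_sub_pos (by linarith)
  · exact angle_lt_pi_div_two_of_inner_sub_pos (by linarith)
  · exact angle_lt_pi_div_two_of_inner_sub_pos (by linarith)
  · refine lt_of_pow_lt_pow_left₀ 2 (by positivity) ?_
    rw [mul_pow, sq_sqrt zero_le_two]
    linarith

/-- if three non-overlapping unit balls in `ℝ³` admit line transversals in
the orders `X Y Z` and `X Z Y`, then the triangle of centers is acute and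
`dist y z < 2√2`. -/
theorem acute_triangle_of_two_transversals (x y z : EuclideanSpace ℝ (Fin 3))
    (hxy : 2 ≤ dist x y) (hxz : 2 ≤ dist x z) (hyz : 2 ≤ dist y z)
    (p v : EuclideanSpace ℝ (Fin 3)) (hv : ‖v‖ = 1)
    (hX : ∃ t : ℝ, dist (p + t • v) x ≤ 1)
    (hY : ∃ t : ℝ, dist (p + t • v) y ≤ 1)
    (hZ : ∃ t : ℝ, dist (p + t • v) z ≤ 1)
    (hord1 : (inner ℝ x v : ℝ) < inner ℝ y v)
    (hord2 : (inner ℝ y v : ℝ) < inner ℝ z v)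
    (q w : EuclideanSpace ℝ (Fin 3)) (hw : ‖w‖ = 1)
    (hX' : ∃ t : ℝ, dist (q + t • w) x ≤ 1)
    (hY' : ∃ t : ℝ, dist (q + t • w) y ≤ 1)
    (hZ' : ∃ t : ℝ, dist (q + t • w) z ≤ 1)
    (hord1' : (inner ℝ x w : ℝ) < inner ℝ z w)
    (hord2' : (inner ℝ z w : ℝ) < inner ℝ y w) :
    (∠ y x z < π / 2 ∧ ∠ x y z < π / 2 ∧ ∠ x z y < π / 2) ∧
      dist y z < 2 * Real.sqrt 2 :=
  acute_triangle_of_two_transversals_general x y z hxy hyz p v hv hX hY hZ hord1 hord2 q w hw hX'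
    hY' hZ' hord1' hord2'
end

section
/- Let R(z) = √(1 − z²) and, for fixed b ∈ [0, 2] and d > 0, let f(z) = (R(z) + R(z − b))/d and G(z) = arcsin(f(z)), defined for b − 1 ≤ z ≤ 1 (assuming f(z) ≤ 1 throughout). Then G is strictly concave on the interval (b/2, 1), i.e., G''(z) < 0 there (wherever f(z) < 1). -/
/-!
Write `f₁, f₂, f₃` for the derivatives of `f` and `g = f₂ (1 - f²) + f f₁²`, so that
`G'' = g / (1 - f²)^{3/2}` and `g' = f₃ (1 - f²) + f₁³`. On `(b/2, 1)` both `f₁` and `f₃` are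
negative: `R'` and `R'''` are odd and decreasing on `(-1, 1)` and `z - b > -z`, so
`R'(z - b) < -R'(z)`, and likewise for `R'''`. Hence `g` is strictly decreasing on `[b/2, 1)`, while
`g(b/2) = f₂(b/2) (1 - f(b/2)²) ≤ 0` because `f₁(b/2) = 0` by symmetry.
-/

open Real Set Filter Topology

noncomputable def sliceRadius (x : ℝ) : ℝ := √(1 - x ^ 2)

section SliceRadius

variable {x y : ℝ}

lemma sliceRadius_pos (hx : x ^ 2 < 1) : 0 < sliceRadius x :=
  Real.sqrt_pos.mpr (by linarith)

lemma sliceRadius_sq (hx : x ^ 2 < 1) : sliceRadius x ^ 2 = 1 - x ^ 2 :=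
  Real.sq_sqrt (by linarith)

lemma hasDerivAt_sliceRadius (hx : x ^ 2 < 1) :
    HasDerivAt sliceRadius (-x / sliceRadius x) x := by
  have h := ((hasDerivAt_pow 2 x).const_sub 1).sqrt (by linarith : 1 - x ^ 2 ≠ 0)
  have hR := sliceRadius_pos hx
  unfold sliceRadius at hR ⊢
  convert h using 1
  field_simp
  ring

lemma hasDerivAt_neg_div_sliceRadius (hx : x ^ 2 < 1) :
    HasDerivAt (fun x => -x / sliceRadius x) (-1 / sliceRadius x ^ 3) x := by
  have hR := sliceRadius_pos hx
  refine ((hasDerivAt_neg x).div (hasDerivAt_sliceRadius hx) hR.ne').congr_deriv ?_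
  field_simp
  linear_combination -sliceRadius_sq hx

lemma hasDerivAt_neg_one_div_sliceRadius_pow_three (hx : x ^ 2 < 1) :
    HasDerivAt (fun x => -1 / sliceRadius x ^ 3) (-3 * x / sliceRadius x ^ 5) x := by
  have hR := sliceRadius_pos hx
  refine ((hasDerivAt_const x (-1 : ℝ)).div ((hasDerivAt_sliceRadius hx).fun_pow 3)
    (pow_pos hR 3).ne').congr_deriv ?_
  field_simp
  ring

-- `x ↦ x / sliceRadius x ^ k` is odd and increasing on `(-1, 1)`.
lemma div_sliceRadius_pow_add_pos (k : ℕ) (hx : x < 1) (hxy : -x < y) (hyx : y ≤ x) :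
    0 < x / sliceRadius x ^ k + y / sliceRadius y ^ k := by
  have hRx : 0 < sliceRadius x ^ k := pow_pos (sliceRadius_pos (by nlinarith)) k
  have hRy : 0 < sliceRadius y ^ k := pow_pos (sliceRadius_pos (by nlinarith)) k
  rcases le_or_gt 0 y with hy | hy
  · have := div_nonneg hy hRy.le
    have := div_pos (by linarith : 0 < x) hRx
    linarith
  · have hRxy : sliceRadius x ^ k ≤ sliceRadius y ^ k :=
      pow_le_pow_left₀ (sliceRadius_pos (by nlinarith)).le (sqrt_le_sqrt (by nlinarith)) k
    have := calc (-y) / sliceRadius y ^ k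
        ≤ (-y) / sliceRadius x ^ k := div_le_div_of_nonneg_left (by linarith) hRx hRxy
      _ < x / sliceRadius x ^ k := by gcongr; linarith
    rw [neg_div] at this
    linarith

end SliceRadius

noncomputable def pairSum (b d : ℝ) (φ : ℝ → ℝ) (z : ℝ) : ℝ := (φ z + φ (z - b)) / d

section PairSum

variable {b d x : ℝ}

lemma sq_lt_one_of_mem_Ico (hb : 0 ≤ b) (hx : x ∈ Ico (b / 2) 1) :
    x ^ 2 < 1 ∧ (x - b) ^ 2 < 1 := by
  obtain ⟨h₁, h₂⟩ := hx
  constructor <;> nlinarith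

lemma hasDerivAt_pairSum {φ φ' : ℝ → ℝ} (hb : 0 ≤ b)
    (hφ : ∀ y, y ^ 2 < 1 → HasDerivAt φ (φ' y) y) (hx : x ∈ Ico (b / 2) 1) :
    HasDerivAt (pairSum b d φ) (pairSum b d φ' x) x := by
  obtain ⟨h₁, h₂⟩ := sq_lt_one_of_mem_Ico hb hx
  exact ((hφ x h₁).add ((hφ (x - b) h₂).comp_sub_const x b)).div_const d

lemma pairSum_sliceRadius_nonneg (hd : 0 < d) : 0 ≤ pairSum b d sliceRadius x := by
  unfold pairSum sliceRadius
  positivity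

lemma pairSum_neg_div_sliceRadius_neg (hb : 0 ≤ b) (hd : 0 < d) (hx : x ∈ Ioo (b / 2) 1) :
    pairSum b d (fun y => -y / sliceRadius y) x < 0 := by
  have h := div_sliceRadius_pow_add_pos 1 (x := x) (y := x - b) hx.2 (by linarith [hx.1])
    (by linarith)
  simp only [pow_one] at h
  simp only [pairSum, neg_div]
  exact div_neg_of_neg_of_pos (by linarith) hd

lemma pairSum_neg_div_sliceRadius_half_eq_zero :
    pairSum b d (fun y => -y / sliceRadius y) (b / 2) = 0 := by
  simp only [pairSum, sliceRadius, show b / 2 - b = -(b / 2) by ring, neg_sq]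
  ring

lemma pairSum_neg_one_div_sliceRadius_pow_three_nonpos (hd : 0 < d) :
    pairSum b d (fun y => -1 / sliceRadius y ^ 3) x ≤ 0 := by
  simp only [pairSum, neg_div]
  apply div_nonpos_of_nonpos_of_nonneg _ hd.le
  have : 0 ≤ 1 / sliceRadius x ^ 3 := by unfold sliceRadius; positivity
  have : 0 ≤ 1 / sliceRadius (x - b) ^ 3 := by unfold sliceRadius; positivity
  linarith

lemma pairSum_neg_three_mul_div_sliceRadius_pow_five_neg (hb : 0 ≤ b) (hd : 0 < d)
    (hx : x ∈ Ioo (b / 2) 1) :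
    pairSum b d (fun y => -3 * y / sliceRadius y ^ 5) x < 0 := by
  have h := div_sliceRadius_pow_add_pos 5 (x := x) (y := x - b) hx.2 (by linarith [hx.1])
    (by linarith)
  simp only [pairSum, mul_div_assoc]
  exact div_neg_of_neg_of_pos (by linarith) hd

end PairSum

noncomputable def concavityNumerator (f f₁ f₂ : ℝ → ℝ) (x : ℝ) : ℝ :=
  f₂ x * (1 - f x ^ 2) + f x * f₁ x ^ 2

section ConcavityNumerator

variable {f f₁ f₂ f₃ : ℝ → ℝ} {a c : ℝ}

lemma hasDerivAt_concavityNumerator {x : ℝ} (hf : HasDerivAt f (f₁ x) x)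
    (hf₁ : HasDerivAt f₁ (f₂ x) x) (hf₂ : HasDerivAt f₂ (f₃ x) x) :
    HasDerivAt (concavityNumerator f f₁ f₂) (f₃ x * (1 - f x ^ 2) + f₁ x ^ 3) x := by
  refine ((hf₂.mul ((hf.fun_pow 2).const_sub 1)).add (hf.mul (hf₁.fun_pow 2))).congr_deriv ?_
  ring

lemma concavityNumerator_neg (hf : ∀ x ∈ Ico a c, HasDerivAt f (f₁ x) x)
    (hf₁ : ∀ x ∈ Ico a c, HasDerivAt f₁ (f₂ x) x) (hf₂ : ∀ x ∈ Ico a c, HasDerivAt f₂ (f₃ x) x)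
    (hsq : ∀ x ∈ Ico a c, f x ^ 2 ≤ 1) (h₁ : ∀ x ∈ Ioo a c, f₁ x < 0)
    (h₃ : ∀ x ∈ Ioo a c, f₃ x < 0) (h₁a : f₁ a = 0) (h₂a : f₂ a ≤ 0) {x : ℝ}
    (hx : x ∈ Ioo a c) : concavityNumerator f f₁ f₂ x < 0 := by
  have hderiv : ∀ y ∈ Ico a c, HasDerivAt (concavityNumerator f f₁ f₂)
      (f₃ y * (1 - f y ^ 2) + f₁ y ^ 3) y := fun y hy =>
    hasDerivAt_concavityNumerator (hf y hy) (hf₁ y hy) (hf₂ y hy)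
  have hanti : StrictAntiOn (concavityNumerator f f₁ f₂) (Ico a c) := by
    refine strictAntiOn_of_hasDerivWithinAt_neg
      (f' := fun y => f₃ y * (1 - f y ^ 2) + f₁ y ^ 3) (convex_Ico a c)
      (fun y hy => (hderiv y hy).continuousAt.continuousWithinAt) (fun y hy => ?_) (fun y hy => ?_)
    · rw [interior_Ico] at hy
      exact (hderiv y (Ioo_subset_Ico_self hy)).hasDerivWithinAt
    · rw [interior_Ico] at hy
      have := mul_nonpos_of_nonpos_of_nonneg (h₃ y hy).le
        (sub_nonneg.mpr (hsq y (Ioo_subset_Ico_self hy)))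
      have := Odd.pow_neg (by decide : Odd 3) (h₁ y hy)
      linarith
  have ha : a ∈ Ico a c := ⟨le_rfl, hx.1.trans hx.2⟩
  calc concavityNumerator f f₁ f₂ x < concavityNumerator f f₁ f₂ a :=
        hanti ha (Ioo_subset_Ico_self hx) hx.1
    _ ≤ 0 := by
        rw [concavityNumerator, h₁a]
        nlinarith [hsq a ha]

end ConcavityNumerator

lemma deriv_deriv_arcsin_comp {f f₁ f₂ : ℝ → ℝ} {z : ℝ}
    (hf : ∀ᶠ w in 𝓝 z, HasDerivAt f (f₁ w) w) (hf₁ : HasDerivAt f₁ (f₂ z) z)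
    (hz : f z ^ 2 < 1) :
    deriv (deriv fun w => arcsin (f w)) z =
      concavityNumerator f f₁ f₂ z / √(1 - f z ^ 2) ^ 3 := by
  have hfz : HasDerivAt f (f₁ z) z := hf.self_of_nhds
  have hnear : ∀ᶠ w in 𝓝 z, f w ^ 2 < 1 :=
    (hfz.continuousAt.pow 2).eventually_lt continuousAt_const hz
  have hderiv : (deriv fun w => arcsin (f w)) =ᶠ[𝓝 z] fun w => f₁ w / √(1 - f w ^ 2) := by
    filter_upwards [hf, hnear] with w hw hw1
    have h₁ : f w ≠ -1 := by intro h; rw [h] at hw1; norm_num at hw1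
    have h₂ : f w ≠ 1 := by intro h; rw [h] at hw1; norm_num at hw1
    refine ((hasDerivAt_arcsin h₁ h₂).comp w hw).deriv.trans ?_
    ring
  have hs : 0 < √(1 - f z ^ 2) := Real.sqrt_pos.mpr (by linarith)
  have hs2 : √(1 - f z ^ 2) ^ 2 = 1 - f z ^ 2 := Real.sq_sqrt (by linarith)
  refine (hderiv.deriv_eq).trans (HasDerivAt.deriv ?_)
  refine (hf₁.div (((hfz.fun_pow 2).const_sub 1).sqrt (by linarith)) hs.ne').congr_deriv ?_
  unfold concavityNumerator
  field_simp
  linear_combination 2 * f₂ z * hs2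

theorem G_second_deriv_neg_general (b d : ℝ) (hb0 : 0 ≤ b) (hd : 0 < d)
    (f G : ℝ → ℝ)
    (hf : ∀ z, f z = (Real.sqrt (1 - z ^ 2) + Real.sqrt (1 - (z - b) ^ 2)) / d)
    (hG : ∀ z, G z = Real.arcsin (f z))
    (hf1 : ∀ z ∈ Set.Icc (b - 1) 1, f z ≤ 1) :
    ∀ z, b / 2 < z → z < 1 → f z < 1 → deriv (deriv G) z < 0 := by
  intro z hz hz1 hfz
  obtain rfl : f = pairSum b d sliceRadius := funext hf
  obtain rfl : G = fun w => arcsin (pairSum b d sliceRadius w) := funext hG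
  have hderiv₀ := fun x => hasDerivAt_pairSum (x := x) (d := d) hb0
    fun _ => hasDerivAt_sliceRadius
  have hderiv₁ := fun x => hasDerivAt_pairSum (x := x) (d := d) hb0
    fun _ => hasDerivAt_neg_div_sliceRadius
  have hderiv₂ := fun x => hasDerivAt_pairSum (x := x) (d := d) hb0
    fun _ => hasDerivAt_neg_one_div_sliceRadius_pow_three
  have hsq : ∀ x ∈ Ico (b / 2) 1, pairSum b d sliceRadius x ^ 2 ≤ 1 := fun x hx => by
    have := hf1 x ⟨by linarith [hx.1, hx.2], hx.2.le⟩
    nlinarith [pairSum_sliceRadius_nonneg (b := b) (x := x) hd]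
  have hz_sq : pairSum b d sliceRadius z ^ 2 < 1 := by
    nlinarith [pairSum_sliceRadius_nonneg (b := b) (x := z) hd]
  have hderiv₀_near : ∀ᶠ x in 𝓝 z, HasDerivAt (pairSum b d sliceRadius)
      (pairSum b d (fun y => -y / sliceRadius y) x) x :=
    mem_of_superset (Ioo_mem_nhds hz hz1) fun x hx => hderiv₀ x (Ioo_subset_Ico_self hx)
  rw [deriv_deriv_arcsin_comp hderiv₀_near (hderiv₁ z ⟨hz.le, hz1⟩) hz_sq]
  refine div_neg_of_neg_of_pos (concavityNumerator_neg hderiv₀ hderiv₁ hderiv₂ hsq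
    (fun x hx => pairSum_neg_div_sliceRadius_neg hb0 hd hx)
    (fun x hx => pairSum_neg_three_mul_div_sliceRadius_pow_five_neg hb0 hd hx)
    pairSum_neg_div_sliceRadius_half_eq_zero (pairSum_neg_one_div_sliceRadius_pow_three_nonpos hd)
    ⟨hz, hz1⟩) ?_
  exact pow_pos (Real.sqrt_pos.mpr (by linarith)) 3

/-- with `R z = √(1 - z²)`, `f z = (R z + R (z - b)) / d` and
`G z = arcsin (f z)` (for `0 ≤ b ≤ 2`, `d > 0`, and `f ≤ 1` on `[b-1, 1]`), the function
`G` is strictly concave on `(b/2, 1)`: its second derivative is negative wherever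
`f z < 1`. -/
theorem G_second_deriv_neg (b d : ℝ) (hb0 : 0 ≤ b) (hb2 : b ≤ 2) (hd : 0 < d)
    (f G : ℝ → ℝ)
    (hf : ∀ z, f z = (Real.sqrt (1 - z ^ 2) + Real.sqrt (1 - (z - b) ^ 2)) / d)
    (hG : ∀ z, G z = Real.arcsin (f z))
    (hf1 : ∀ z ∈ Set.Icc (b - 1) 1, f z ≤ 1) :
    ∀ z, b / 2 < z → z < 1 → f z < 1 → deriv (deriv G) z < 0 :=
  G_second_deriv_neg_general b d hb0 hd f G hf hG hf1
end

section
/- Let F be a finite family of pairwise interior-disjoint closed disks in the plane. If F admits two distinct line transversals that meet the disks in the same order, then F admits a line transversal meeting the disks in that same order and intersecting the interior of every disk. -/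
/-!
Measure everything in the frame of the first transversal `ℓ`: a disk meets `ℓ` iff the signed
distance `ω u (c - p)` of its centre is at most its radius in absolute value, and it is tangent
to `ℓ` from the left or from the right when this distance is `r` or `-r`. If every disk tangent
from the left comes, along `ℓ`, after every disk tangent from the right, then rotating `ℓ` by a
small positive angle about a point between these two groups moves it into the interior of every
disk, and a small enough rotation keeps the order of the projections of the centres.

The second transversal provides this separation for one of the two orientations of the plane.
If it is parallel to `ℓ` it is a translate of `ℓ`, and then no two disks can be tangent to `ℓ`
from opposite sides. Otherwise orient the plane so that it turns to the left of `ℓ`; a left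
tangent disk before a right tangent one would force it, by the two transversality bounds and
the order condition, to be parallel to `ℓ`.
-/

open Real Filter Topology Module
open scoped RealInnerProductSpace

theorem Finite.exists_between_of_forall_le {ι α : Type*} [Finite ι] [LinearOrder α] [Nonempty α]
    {f : ι → α} {A B : ι → Prop} (h : ∀ a b, A a → B b → f b ≤ f a) :
    ∃ q, (∀ b, B b → f b ≤ q) ∧ ∀ a, A a → q ≤ f a := by
  by_cases hB : ∃ b, B b
  · obtain ⟨b₀, hb₀, hmax⟩ := Set.exists_max_image {b | B b} f (Set.toFinite _) hB
    exact ⟨f b₀, hmax, fun a ha => h a b₀ ha hb₀⟩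
  · obtain ⟨m, hm⟩ := (Set.toFinite (Set.range f)).bddBelow
    exact ⟨m, fun b hb => (hB ⟨b, hb⟩).elim, fun a _ => hm ⟨a, rfl⟩⟩

theorem eventually_cos_mul_add_sin_mul_lt_of_lt {s r : ℝ} (a : ℝ) (h : s < r) :
    ∀ᶠ θ in 𝓝 0, cos θ * s + sin θ * a < r := by
  have hcont : Continuous fun θ => cos θ * s + sin θ * a := by fun_prop
  exact hcont.continuousAt.eventually_lt continuousAt_const (by simpa using h)

theorem eventually_cos_mul_add_sin_mul_lt {s r a : ℝ} (hr : 0 < r) (hs : s ≤ r)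
    (ha : s = r → a ≤ 0) : ∀ᶠ θ in 𝓝[>] 0, cos θ * s + sin θ * a < r := by
  rcases hs.lt_or_eq with hlt | rfl
  · exact (eventually_cos_mul_add_sin_mul_lt_of_lt a hlt).filter_mono nhdsWithin_le_nhds
  · filter_upwards [Ioo_mem_nhdsGT pi_pos] with θ ⟨hθ₀, hθπ⟩
    have hcos : cos θ < 1 := by
      simpa using cos_lt_cos_of_nonneg_of_le_pi le_rfl hθπ.le hθ₀
    have hsin : 0 ≤ sin θ := sin_nonneg_of_nonneg_of_le_pi hθ₀.le hθπ.le
    nlinarith [ha rfl]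

theorem eventually_abs_cos_mul_add_sin_mul_lt {s r a : ℝ} (hr : 0 < r) (hs : |s| ≤ r)
    (h₁ : s = r → a ≤ 0) (h₂ : s = -r → 0 ≤ a) :
    ∀ᶠ θ in 𝓝[>] 0, |cos θ * s + sin θ * a| < r := by
  rw [abs_le] at hs
  filter_upwards [eventually_cos_mul_add_sin_mul_lt hr hs.2 h₁,
    eventually_cos_mul_add_sin_mul_lt (s := -s) (a := -a) hr (by linarith)
      (fun h => by linarith [h₂ (by linarith)])] with θ hθ₁ hθ₂
  rw [abs_lt]
  constructor <;> linarith

theorem range_add_smul_eq {𝕜 V : Type*} [Field 𝕜] [AddCommGroup V] [Module 𝕜 V] {p v p' v' : V}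
    {a b : 𝕜} (ha : a ≠ 0) (hv : v' = a • v) (hp : p' = p + b • v) :
    Set.range (fun t : 𝕜 => p + t • v) = Set.range (fun t : 𝕜 => p' + t • v') := by
  subst hv hp
  ext x
  constructor
  · rintro ⟨t, rfl⟩
    refine ⟨(t - b) / a, ?_⟩
    simp only [smul_smul, div_mul_cancel₀ _ ha]
    module
  · rintro ⟨t, rfl⟩
    exact ⟨b + t * a, by simp only [smul_smul]; module⟩

theorem inner_sub_lt_inner_sub_iff {V : Type*} [NormedAddCommGroup V] [InnerProductSpace ℝ V]
    (v a b p : V) : ⟪v, a - p⟫ < ⟪v, b - p⟫ ↔ ⟪a, v⟫ < ⟪b, v⟫ := by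
  rw [inner_sub_right, inner_sub_right, real_inner_comm a, real_inner_comm b, sub_lt_sub_iff_right]

namespace Orientation

variable {V : Type*} [NormedAddCommGroup V] [InnerProductSpace ℝ V] [Fact (finrank ℝ V = 2)]
  (o : Orientation ℝ V (Fin 2))

local notation "ω" => o.areaForm

theorem sq_norm_eq_inner_sq_add_areaForm_sq {v : V} (hv : ‖v‖ = 1) (x : V) :
    ‖x‖ ^ 2 = ⟪v, x⟫ ^ 2 + ω v x ^ 2 := by
  simpa [hv] using (o.inner_sq_add_areaForm_sq v x).symm

theorem sq_dist_add_smul {v : V} (hv : ‖v‖ = 1) (p c : V) (t : ℝ) :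
    dist (p + t • v) c ^ 2 = (⟪v, c - p⟫ - t) ^ 2 + ω v (c - p) ^ 2 := by
  rw [dist_comm, dist_eq_norm, show c - (p + t • v) = (c - p) - t • v by abel,
    o.sq_norm_eq_inner_sq_add_areaForm_sq hv]
  simp [inner_sub_right, inner_smul_right, hv]

theorem abs_areaForm_sub_le_of_dist_le {v : V} (hv : ‖v‖ = 1) {p c : V} {r t : ℝ}
    (h : dist (p + t • v) c ≤ r) : |ω v (c - p)| ≤ r := by
  refine (abs_le_of_sq_le_sq ?_ dist_nonneg).trans h
  rw [o.sq_dist_add_smul hv]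
  exact le_add_of_nonneg_left (sq_nonneg _)

theorem dist_add_inner_smul {v : V} (hv : ‖v‖ = 1) (p c : V) :
    dist (p + ⟪v, c - p⟫ • v) c = |ω v (c - p)| := by
  rw [← sqrt_sq dist_nonneg, o.sq_dist_add_smul hv, sub_self, zero_pow two_ne_zero, zero_add,
    sqrt_sq_eq_abs]

theorem inner_rotation_left (θ : Real.Angle) (x y : V) :
    ⟪o.rotation θ x, y⟫ = θ.cos * ⟪x, y⟫ + θ.sin * ω x y := by
  simp [rotation_apply, inner_add_left, inner_smul_left, inner_rightAngleRotation_left]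

theorem areaForm_rotation_left (θ : Real.Angle) (x y : V) :
    ω (o.rotation θ x) y = θ.cos * ω x y - θ.sin * ⟪x, y⟫ := by
  simp only [rotation_apply, map_add, map_smul, LinearMap.add_apply, LinearMap.smul_apply,
    smul_eq_mul, areaForm_rightAngleRotation_left]
  ring

theorem eq_inner_smul_of_areaForm_eq_zero {v x : V} (hv : ‖v‖ = 1) (h : ω v x = 0) :
    x = ⟪v, x⟫ • v := by
  refine ext_inner_left ℝ fun y => ?_
  have := o.inner_mul_inner_add_areaForm_mul_areaForm v x y
  rw [hv, h] at this
  rw [inner_smul_right, real_inner_comm x y, real_inner_comm v y]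
  linarith

theorem range_add_smul_eq_of_areaForm_eq_zero {p₁ v₁ p₂ v₂ : V} (hv₁ : ‖v₁‖ = 1) (hv₂ : v₂ ≠ 0)
    (hpar : ω v₁ v₂ = 0) (hp : ω v₁ (p₂ - p₁) = 0) :
    Set.range (fun t : ℝ => p₁ + t • v₁) = Set.range (fun t : ℝ => p₂ + t • v₂) := by
  have hv := o.eq_inner_smul_of_areaForm_eq_zero hv₁ hpar
  refine range_add_smul_eq (b := ⟪v₁, p₂ - p₁⟫) (fun h => hv₂ ?_) hv ?_
  · rw [hv, h, zero_smul]
  · rw [← o.eq_inner_smul_of_areaForm_eq_zero hv₁ hp]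
    abel

theorem areaForm_rotation_sub_add_smul {u : V} (hu : ‖u‖ = 1) (θ : ℝ) (p c : V) (q : ℝ) :
    ω (o.rotation θ u) (c - (p + q • u)) = cos θ * ω u (c - p) + sin θ * (q - ⟪u, c - p⟫) := by
  have h : c - (p + q • u) = (c - p) - q • u := by abel
  simp [areaForm_rotation_left, h, inner_sub_right, inner_smul_right, hu]
  ring

theorem eventually_inner_rotation_lt {u x y : V} (h : ⟪x, u⟫ < ⟪y, u⟫) :
    ∀ᶠ θ : ℝ in 𝓝 0, ⟪x, o.rotation θ u⟫ < ⟪y, o.rotation θ u⟫ := by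
  have hpos : -⟪u, y - x⟫ < 0 := by
    rw [inner_sub_right, real_inner_comm x, real_inner_comm y]
    linarith
  filter_upwards [eventually_cos_mul_add_sin_mul_lt_of_lt (-ω u (y - x)) hpos] with θ hθ
  rw [← sub_pos, ← inner_sub_left, real_inner_comm, o.inner_rotation_left, Real.Angle.cos_coe,
    Real.Angle.sin_coe]
  linarith

theorem inner_sub_le_inner_sub_of_areaForm_pos {p₁ v₁ p₂ v₂ ca cb : V} {ra rb : ℝ}
    (hv₁ : ‖v₁‖ = 1) (hv₂ : ‖v₂‖ = 1) (hβ : 0 < ω v₁ v₂)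
    (ha₂ : ∃ t : ℝ, dist (p₂ + t • v₂) ca ≤ ra) (hb₂ : ∃ t : ℝ, dist (p₂ + t • v₂) cb ≤ rb)
    (horder : ⟪ca, v₁⟫ < ⟪cb, v₁⟫ → ⟪ca, v₂⟫ < ⟪cb, v₂⟫)
    (ha : ω v₁ (ca - p₁) = ra) (hb : ω v₁ (cb - p₁) = -rb) :
    ⟪v₁, cb - p₁⟫ ≤ ⟪v₁, ca - p₁⟫ := by
  by_contra! hlt
  obtain ⟨ta, hta⟩ := ha₂
  obtain ⟨tb, htb⟩ := hb₂
  have hframe (x : V) : ω v₂ (x - p₂) =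
      ⟪v₁, v₂⟫ * ω v₁ (x - p₁) - ω v₁ v₂ * ⟪v₁, x - p₁⟫ - ω v₂ (p₂ - p₁) := by
    have := o.inner_mul_areaForm_sub v₁ v₂ (x - p₁)
    rw [hv₁, one_pow, one_mul] at this
    rw [show x - p₂ = (x - p₁) - (p₂ - p₁) by abel, map_sub, ← this]
  have hmeet_a := o.abs_areaForm_sub_le_of_dist_le hv₂ hta
  have hmeet_b := o.abs_areaForm_sub_le_of_dist_le hv₂ htb
  rw [hframe, ha] at hmeet_a
  rw [hframe, hb] at hmeet_b
  have hv₁₂ : ⟪v₁, v₂⟫ ^ 2 + ω v₁ v₂ ^ 2 = 1 := by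
    simpa [hv₁, hv₂] using o.inner_sq_add_areaForm_sq v₁ v₂
  have hshift (x : V) : ⟪v₂, x - p₁⟫ = ⟪v₁, v₂⟫ * ⟪v₁, x - p₁⟫ + ω v₁ v₂ * ω v₁ (x - p₁) := by
    simpa [hv₁] using (o.inner_mul_inner_add_areaForm_mul_areaForm v₁ v₂ (x - p₁)).symm
  have h₂ := (inner_sub_lt_inner_sub_iff v₂ ca cb p₁).2
    (horder ((inner_sub_lt_inner_sub_iff v₁ ca cb p₁).1 hlt))
  rw [hshift ca, hshift cb, ha, hb] at h₂
  rw [abs_le] at hmeet_a hmeet_b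
  set α := ⟪v₁, v₂⟫
  set β := ω v₁ v₂
  set D := ⟪v₁, cb - p₁⟫ - ⟪v₁, ca - p₁⟫
  have hD : 0 < D := sub_pos.2 hlt
  have hmeet : α * (ra + rb) + β * D ≤ ra + rb := by linarith
  have hord : β * (ra + rb) < α * D := by linarith
  have hα : 0 < α := pos_of_mul_pos_left (by nlinarith : 0 < α * D) hD.le
  have hα₁ : α ≤ 1 := by nlinarith
  -- Multiplying `hmeet` by `β` and `hord` by `1 - α` gives `(α ^ 2 + β ^ 2) * D ≤ α * D`.
  have hβα : β ^ 2 * D ≤ α * D * (1 - α) := by nlinarith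
  have : 1 ≤ α := by nlinarith
  nlinarith

theorem areaForm_sub_eq_zero_of_areaForm_eq_zero {p₁ v₁ p₂ v₂ ca cb : V} {ra rb : ℝ}
    (hv₁ : ‖v₁‖ = 1) (hv₂ : ‖v₂‖ = 1) (hpar : ω v₁ v₂ = 0)
    (ha₂ : ∃ t : ℝ, dist (p₂ + t • v₂) ca ≤ ra) (hb₂ : ∃ t : ℝ, dist (p₂ + t • v₂) cb ≤ rb)
    (ha : ω v₁ (ca - p₁) = ra) (hb : ω v₁ (cb - p₁) = -rb) :
    ω v₁ (p₂ - p₁) = 0 := by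
  obtain ⟨ta, hta⟩ := ha₂
  obtain ⟨tb, htb⟩ := hb₂
  have hframe (x : V) : ω v₂ (x - p₂) = ⟪v₁, v₂⟫ * (ω v₁ (x - p₁) - ω v₁ (p₂ - p₁)) := by
    have := o.inner_mul_areaForm_sub v₁ v₂ (x - p₂)
    rw [hv₁, hpar, one_pow, one_mul, zero_mul, sub_zero] at this
    rw [← this, show x - p₂ = (x - p₁) - (p₂ - p₁) by abel, map_sub]
  have hα : ⟪v₁, v₂⟫ ^ 2 = 1 := by
    simpa [hv₁, hv₂, hpar] using o.inner_sq_add_areaForm_sq v₁ v₂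
  have hmeet_a := o.abs_areaForm_sub_le_of_dist_le hv₂ hta
  have hmeet_b := o.abs_areaForm_sub_le_of_dist_le hv₂ htb
  rw [hframe, ha] at hmeet_a
  rw [hframe, hb] at hmeet_b
  have hra : 0 ≤ ra := (abs_nonneg _).trans hmeet_a
  have hrb : 0 ≤ rb := (abs_nonneg _).trans hmeet_b
  have hsq_a := sq_le_sq' (abs_le.1 hmeet_a).1 (abs_le.1 hmeet_a).2
  have hsq_b := sq_le_sq' (abs_le.1 hmeet_b).1 (abs_le.1 hmeet_b).2
  rw [mul_pow, hα, one_mul] at hsq_a hsq_b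
  set H := ω v₁ (p₂ - p₁)
  nlinarith

theorem exists_interior_transversal_of_tangent_order {ι : Type*} [Finite ι] {c : ι → V}
    {r : ι → ℝ} (hr : ∀ i, 0 < r i) {p u : V} (hu : ‖u‖ = 1)
    (htrans : ∀ i, ∃ t : ℝ, dist (p + t • u) (c i) ≤ r i)
    (htangent : ∀ a b, ω u (c a - p) = r a → ω u (c b - p) = -r b → ⟪u, c b - p⟫ ≤ ⟪u, c a - p⟫) :
    ∃ p' v : V, ‖v‖ = 1 ∧ (∀ i, ∃ t : ℝ, dist (p' + t • v) (c i) < r i) ∧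
      ∀ i j, ⟪c i, u⟫ < ⟪c j, u⟫ → ⟪c i, v⟫ < ⟪c j, v⟫ := by
  obtain ⟨q, hq_right, hq_left⟩ :=
    Finite.exists_between_of_forall_le (f := fun i => ⟪u, c i - p⟫) htangent
  have hdisk : ∀ i, ∀ᶠ θ : ℝ in 𝓝[>] 0, |ω (o.rotation θ u) (c i - (p + q • u))| < r i := by
    intro i
    obtain ⟨t, ht⟩ := htrans i
    simp_rw [o.areaForm_rotation_sub_add_smul hu]
    exact eventually_abs_cos_mul_add_sin_mul_lt (hr i) (o.abs_areaForm_sub_le_of_dist_le hu ht)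
      (fun h => sub_nonpos.2 (hq_left i h)) (fun h => sub_nonneg.2 (hq_right i h))
  have horder : ∀ᶠ θ : ℝ in 𝓝[>] 0,
      ∀ i j, ⟪c i, u⟫ < ⟪c j, u⟫ → ⟪c i, o.rotation θ u⟫ < ⟪c j, o.rotation θ u⟫ := by
    simp only [eventually_all]
    exact fun i j h => (o.eventually_inner_rotation_lt h).filter_mono nhdsWithin_le_nhds
  obtain ⟨θ, hθ_disk, hθ_order⟩ := ((eventually_all.2 hdisk).and horder).exists
  have hv : ‖o.rotation θ u‖ = 1 := by rw [LinearIsometryEquiv.norm_map, hu]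
  exact ⟨p + q • u, o.rotation θ u, hv,
    fun i => ⟨_, (o.dist_add_inner_smul hv _ _).trans_lt (hθ_disk i)⟩, hθ_order⟩

end Orientation

theorem transversal_through_interiors_general {ι : Type*} [Finite ι]
    (c : ι → EuclideanSpace ℝ (Fin 2)) (r : ι → ℝ) (hr : ∀ i, 0 < r i)
    (p₁ v₁ p₂ v₂ : EuclideanSpace ℝ (Fin 2)) (hv₁ : ‖v₁‖ = 1) (hv₂ : ‖v₂‖ = 1)
    (htrans₁ : ∀ i, ∃ t : ℝ, dist (p₁ + t • v₁) (c i) ≤ r i)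
    (htrans₂ : ∀ i, ∃ t : ℝ, dist (p₂ + t • v₂) (c i) ≤ r i)
    (hdistinct : Set.range (fun t : ℝ => p₁ + t • v₁) ≠
      Set.range (fun t : ℝ => p₂ + t • v₂))
    (horder : ∀ i j : ι, (inner ℝ (c i) v₁ : ℝ) < inner ℝ (c j) v₁ →
      (inner ℝ (c i) v₂ : ℝ) < inner ℝ (c j) v₂) :
    ∃ p v : EuclideanSpace ℝ (Fin 2), ‖v‖ = 1 ∧
      (∀ i, ∃ t : ℝ, dist (p + t • v) (c i) < r i) ∧
      (∀ i j : ι, (inner ℝ (c i) v₁ : ℝ) < inner ℝ (c j) v₁ →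
        (inner ℝ (c i) v : ℝ) < inner ℝ (c j) v) := by
  have : Fact (finrank ℝ (EuclideanSpace ℝ (Fin 2)) = 2) := ⟨finrank_euclideanSpace_fin⟩
  let o : Orientation ℝ (EuclideanSpace ℝ (Fin 2)) (Fin 2) :=
    (EuclideanSpace.basisFun (Fin 2) ℝ).toBasis.orientation
  rcases lt_trichotomy (o.areaForm v₁ v₂) 0 with hβ | hβ | hβ
  · have hβ' : 0 < (-o).areaForm v₁ v₂ := by
      simpa [Orientation.areaForm_neg_orientation] using hβ
    refine (-o).exists_interior_transversal_of_tangent_order hr hv₁ htrans₁ fun a b ha hb => ?_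
    exact (-o).inner_sub_le_inner_sub_of_areaForm_pos hv₁ hv₂ hβ' (htrans₂ a) (htrans₂ b)
      (horder a b) ha hb
  · refine o.exists_interior_transversal_of_tangent_order hr hv₁ htrans₁ fun a b ha hb => ?_
    have hv₂₀ : v₂ ≠ 0 := norm_ne_zero_iff.1 (by rw [hv₂]; exact one_ne_zero)
    exact absurd (o.range_add_smul_eq_of_areaForm_eq_zero hv₁ hv₂₀ hβ
      (o.areaForm_sub_eq_zero_of_areaForm_eq_zero hv₁ hv₂ hβ (htrans₂ a) (htrans₂ b) ha hb))
      hdistinct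
  · refine o.exists_interior_transversal_of_tangent_order hr hv₁ htrans₁ fun a b ha hb => ?_
    exact o.inner_sub_le_inner_sub_of_areaForm_pos hv₁ hv₂ hβ (htrans₂ a) (htrans₂ b)
      (horder a b) ha hb

/-- if a finite family of interior-disjoint closed disks in the plane has two
distinct line transversals meeting the disks in the same order, then it has a transversal
meeting the disks in that order through the interior of every disk. -/
theorem transversal_through_interiors {ι : Type*} [Finite ι]
    (c : ι → EuclideanSpace ℝ (Fin 2)) (r : ι → ℝ) (hr : ∀ i, 0 < r i)
    (hdisj : ∀ i j : ι, i ≠ j → r i + r j ≤ dist (c i) (c j))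
    (p₁ v₁ p₂ v₂ : EuclideanSpace ℝ (Fin 2)) (hv₁ : ‖v₁‖ = 1) (hv₂ : ‖v₂‖ = 1)
    (htrans₁ : ∀ i, ∃ t : ℝ, dist (p₁ + t • v₁) (c i) ≤ r i)
    (htrans₂ : ∀ i, ∃ t : ℝ, dist (p₂ + t • v₂) (c i) ≤ r i)
    (hdistinct : Set.range (fun t : ℝ => p₁ + t • v₁) ≠
      Set.range (fun t : ℝ => p₂ + t • v₂))
    (horder : ∀ i j : ι, (inner ℝ (c i) v₁ : ℝ) < inner ℝ (c j) v₁ →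
      (inner ℝ (c i) v₂ : ℝ) < inner ℝ (c j) v₂) :
    ∃ p v : EuclideanSpace ℝ (Fin 2), ‖v‖ = 1 ∧
      (∀ i, ∃ t : ℝ, dist (p + t • v) (c i) < r i) ∧
      (∀ i j : ι, (inner ℝ (c i) v₁ : ℝ) < inner ℝ (c j) v₁ →
        (inner ℝ (c i) v : ℝ) < inner ℝ (c j) v) :=
  transversal_through_interiors_general c r hr p₁ v₁ p₂ v₂ hv₁ hv₂ htrans₁ htrans₂ hdistinct horder
end
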